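/- arXiv:1310.5304 — 6 statements merged into one kernel-verified Lean document; each statement's English description precedes it below -/
import Mathlib

section
/- Let (Ω', F', P') be a probability space, let (X_n)_{n∈ℕ} be a sequence of nonnegative integrable real-valued random variables on it, and let (G_n)_{n∈ℕ} be sub-σ-algebras of F'. If the conditional expectations E'[X_n | G_n] converge to 0 in probability as n → ∞, then X_n converges to 0 in probability as n → ∞. -/
/-!
Let `Y = E[X | G]` and `A = {Y ≤ δ}`. Since `A ∈ G`, `∫_A X = ∫_A Y ≤ δ`, so Markov's inequality on `A`
gives `P({X ≥ ε} ∩ A) ≤ δ / ε`, while `P({X ≥ ε} \ A) ≤ P(Y > δ)`. Letting first `n → ∞` and then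
`δ → 0` yields the claim.
-/

open MeasureTheory Filter

section

variable {Ω : Type*} {m m0 : MeasurableSpace Ω} {μ : Measure Ω} [IsFiniteMeasure μ] {X : Ω → ℝ}

lemma mul_measureReal_inter_condExp_le_le (hm : m ≤ m0) (hX_nonneg : 0 ≤ᵐ[μ] X)
    (hX : Integrable X μ) (ε δ : ℝ) :
    ε * μ.real ({ω | ε ≤ X ω} ∩ {ω | μ[X|m] ω ≤ δ}) ≤ δ * μ.real {ω | μ[X|m] ω ≤ δ} := by
  set A := {ω | μ[X|m] ω ≤ δ}
  have hA : MeasurableSet[m] A :=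
    measurableSet_le stronglyMeasurable_condExp.measurable measurable_const
  calc ε * μ.real ({ω | ε ≤ X ω} ∩ A)
      = ε * (μ.restrict A).real {ω | ε ≤ X ω} := by rw [measureReal_restrict_apply' (hm _ hA)]
    _ ≤ ∫ ω in A, X ω ∂μ :=
        mul_meas_ge_le_integral_of_nonneg (ae_restrict_of_ae hX_nonneg) hX.restrict ε
    _ = ∫ ω in A, μ[X|m] ω ∂μ := (setIntegral_condExp hm hX hA).symm
    _ ≤ ∫ _ in A, δ ∂μ :=
        setIntegral_mono_on integrable_condExp.integrableOn integrableOn_const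
          (hm _ hA) fun _ hω ↦ hω
    _ = δ * μ.real A := by rw [setIntegral_const, smul_eq_mul, mul_comm]

lemma measure_le_measure_condExp_gt_add (hm : m ≤ m0) (hX_nonneg : 0 ≤ᵐ[μ] X)
    (hX : Integrable X μ) {ε δ : ℝ} (hε : 0 < ε) (hδ : 0 ≤ δ) :
    μ {ω | ε ≤ X ω} ≤ μ {ω | δ < μ[X|m] ω} + ENNReal.ofReal (δ / ε) * μ Set.univ := by
  set A := {ω | μ[X|m] ω ≤ δ}
  have h_inter : μ.real ({ω | ε ≤ X ω} ∩ A) ≤ δ / ε * μ.real Set.univ := by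
    rw [div_mul_eq_mul_div, le_div_iff₀' hε]
    calc ε * μ.real ({ω | ε ≤ X ω} ∩ A)
        ≤ δ * μ.real A := mul_measureReal_inter_condExp_le_le hm hX_nonneg hX ε δ
      _ ≤ δ * μ.real Set.univ :=
          mul_le_mul_of_nonneg_left (measureReal_mono (Set.subset_univ A)) hδ
  calc μ {ω | ε ≤ X ω}
      ≤ μ ({ω | ε ≤ X ω} \ A) + μ ({ω | ε ≤ X ω} ∩ A) := by
        rw [add_comm]; exact measure_le_inter_add_sdiff μ _ A
    _ ≤ μ {ω | δ < μ[X|m] ω} + ENNReal.ofReal (δ / ε) * μ Set.univ := by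
        gcongr
        · exact fun ω hω ↦ show δ < μ[X|m] ω from not_le.mp hω.2
        · rw [← ofReal_measureReal, ← ofReal_measureReal, ← ENNReal.ofReal_mul (by positivity)]
          exact ENNReal.ofReal_le_ofReal h_inter

end

/-- Lemma 3.2 (Ogihara, LAMN for nonsynchronously observed diffusions):
if the conditional expectations `E[Xₙ | Gₙ]` of nonnegative integrable random
variables converge to `0` in probability, then `Xₙ → 0` in probability. -/
theorem condexp_tendsto_in_prob_implies_tendsto_in_prob
    {Ω' : Type*} [m0 : MeasurableSpace Ω'] (P' : Measure Ω') [IsProbabilityMeasure P']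
    (X : ℕ → Ω' → ℝ) (G : ℕ → MeasurableSpace Ω')
    (hG : ∀ n, G n ≤ m0)
    (hX_nonneg : ∀ n ω, 0 ≤ X n ω)
    (hX_int : ∀ n, Integrable (X n) P')
    (hcond : ∀ ε : ℝ, 0 < ε →
      Tendsto (fun n => P' {ω | ε < |(P'[X n | G n]) ω|}) atTop (nhds 0)) :
    ∀ ε : ℝ, 0 < ε →
      Tendsto (fun n => P' {ω | ε < |X n ω|}) atTop (nhds 0) := by
  intro ε hε
  rw [ENNReal.tendsto_nhds_zero]
  intro η hη
  obtain ⟨r, -, hr_pos, hr_lt⟩ := ENNReal.lt_iff_exists_real_btwn.mp (ENNReal.half_pos hη.ne')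
  have hr : 0 < r := ENNReal.ofReal_pos.mp hr_pos
  filter_upwards [ENNReal.tendsto_nhds_zero.mp (hcond (ε * r) (by positivity)) _
    (ENNReal.half_pos hη.ne')] with n hn
  calc P' {ω | ε < |X n ω|}
      ≤ P' {ω | ε ≤ X n ω} :=
        measure_mono fun ω (hω : ε < |X n ω|) ↦ (hω.trans_eq (abs_of_nonneg (hX_nonneg n ω))).le
    _ ≤ P' {ω | ε * r < P'[X n | G n] ω} + ENNReal.ofReal (ε * r / ε) * P' Set.univ :=
        measure_le_measure_condExp_gt_add (hG n) (ae_of_all _ (hX_nonneg n)) (hX_int n) hε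
          (by positivity)
    _ ≤ P' {ω | ε * r < |P'[X n | G n] ω|} + ENNReal.ofReal r := by
        rw [measure_univ, mul_one, mul_div_cancel_left₀ r hε.ne']
        gcongr with ω
        exact le_abs_self _
    _ ≤ η / 2 + η / 2 := add_le_add hn hr_lt.le
    _ = η := ENNReal.add_halves η
end

section
/- Let Θ be a set, let (Ω', F', P') be a probability space, let {X_{n,λ}}_{n∈ℕ, λ∈Θ} be a family of integrable real-valued random variables on it, and let (G_n)_{n∈ℕ} be sub-σ-algebras of F'. Assume that for every ε > 0 there exists M > 0 such that sup_{n∈ℕ, λ∈Θ} P'[ E'[|X_{n,λ}| | G_n] > M ] < ε. Then for every ε > 0 there exists M > 0 such that sup_{n∈ℕ, λ∈Θ} P'[ |X_{n,λ}| > M ] < ε. -/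
/-!
On the `G`-measurable event `A = {E[|X| | G] ≤ K}` one has
`∫_A |X| = ∫_A E[|X| | G] ≤ K`, so Markov's inequality gives `P(A ∩ {|X| ≥ M}) ≤ K / M`,
while the complement of `A` is the event controlled by the hypothesis. Choosing `K` for `ε / 2`
and `M = 2K / ε` makes both contributions smaller than `ε / 2`, uniformly in `n` and `λ`.
-/

open MeasureTheory Filter

namespace MeasureTheory

variable {Ω : Type*} {m m0 : MeasurableSpace Ω} {μ : Measure Ω}

theorem setIntegral_le_of_condExp_le [IsFiniteMeasure μ] (hm : m ≤ m0) {f : Ω → ℝ}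
    (hf : Integrable f μ) {s : Set Ω} (hs : MeasurableSet[m] s) {K : ℝ}
    (hK : ∀ ω ∈ s, μ[f | m] ω ≤ K) :
    ∫ ω in s, f ω ∂μ ≤ K * μ.real s := by
  rw [← setIntegral_condExp hm hf hs]
  calc ∫ ω in s, μ[f | m] ω ∂μ ≤ ∫ _ in s, K ∂μ :=
        setIntegral_mono_on integrable_condExp.integrableOn (integrable_const K).integrableOn
          (hm s hs) hK
    _ = K * μ.real s := by rw [setIntegral_const, smul_eq_mul, mul_comm]

theorem measureReal_inter_le_setIntegral_div {g : Ω → ℝ} (hg_nonneg : ∀ ω, 0 ≤ g ω)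
    (hg : Integrable g μ) {s : Set Ω} (hs : MeasurableSet s) {M : ℝ} (hM : 0 < M) :
    μ.real (s ∩ {ω | M ≤ g ω}) ≤ (∫ ω in s, g ω ∂μ) / M := by
  rw [le_div_iff₀' hM, Set.inter_comm, ← measureReal_restrict_apply' hs]
  exact mul_meas_ge_le_integral_of_nonneg (ae_of_all _ hg_nonneg) hg.restrict M

theorem measure_lt_abs_le_measure_lt_condExp_add [IsProbabilityMeasure μ] (hm : m ≤ m0)
    {f : Ω → ℝ} (hf : Integrable f μ) {K M : ℝ} (hK : 0 ≤ K) (hM : 0 < M) :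
    μ {ω | M < |f ω|} ≤ μ {ω | K < μ[fun ω => |f ω| | m] ω} + ENNReal.ofReal (K / M) := by
  set A := {ω | μ[fun ω => |f ω| | m] ω ≤ K}
  have hA : MeasurableSet[m] A :=
    stronglyMeasurable_condExp.measurable (measurableSet_Iic (a := K))
  have hf_abs : Integrable (fun ω => |f ω|) μ := hf.abs
  have h_markov : μ.real (A ∩ {ω | M ≤ |f ω|}) ≤ K / M :=
    calc μ.real (A ∩ {ω | M ≤ |f ω|}) ≤ (∫ ω in A, |f ω| ∂μ) / M :=
          measureReal_inter_le_setIntegral_div (fun ω => abs_nonneg _) hf_abs (hm A hA) hM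
      _ ≤ K * μ.real A / M := by
          gcongr; exact setIntegral_le_of_condExp_le hm hf_abs hA fun ω hω => hω
      _ ≤ K / M := by gcongr; exact mul_le_of_le_one_right hK measureReal_le_one
  calc μ {ω | M < |f ω|} ≤ μ ({ω | K < μ[fun ω => |f ω| | m] ω} ∪ A ∩ {ω | M ≤ |f ω|}) :=
        measure_mono fun ω hω =>
          (lt_or_ge K _).imp id fun hle => ⟨hle, (show M < |f ω| from hω).le⟩
    _ ≤ μ {ω | K < μ[fun ω => |f ω| | m] ω} + μ (A ∩ {ω | M ≤ |f ω|}) := measure_union_le _ _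
    _ ≤ μ {ω | K < μ[fun ω => |f ω| | m] ω} + ENNReal.ofReal (K / M) := by
        gcongr
        rw [← ofReal_measureReal]
        exact ENNReal.ofReal_le_ofReal h_markov

end MeasureTheory

/-- Lemma 3.3 (Ogihara, LAMN for nonsynchronously observed diffusions):
uniform tightness of the conditional expectations `E[|X_{n,λ}| | Gₙ]` implies
uniform tightness of the family `{X_{n,λ}}`. -/
theorem tight_of_condexp_tight
    {Ω' : Type*} {Θ : Type*} [m0 : MeasurableSpace Ω'] (P' : Measure Ω')
    [IsProbabilityMeasure P']
    (X : ℕ → Θ → Ω' → ℝ) (G : ℕ → MeasurableSpace Ω')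
    (hG : ∀ n, G n ≤ m0)
    (hX_int : ∀ n lam, Integrable (X n lam) P')
    (h : ∀ ε : ℝ, 0 < ε → ∃ M : ℝ, 0 < M ∧
      (⨆ n : ℕ, ⨆ lam : Θ,
        P' {ω | M < (P'[fun ω' => |X n lam ω'| | G n]) ω}) < ENNReal.ofReal ε) :
    ∀ ε : ℝ, 0 < ε → ∃ M : ℝ, 0 < M ∧
      (⨆ n : ℕ, ⨆ lam : Θ, P' {ω | M < |X n lam ω|}) < ENNReal.ofReal ε := by
  intro ε hε
  obtain ⟨K, hK, hK_tight⟩ := h (ε / 2) (half_pos hε)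
  refine ⟨2 * K / ε, by positivity, ?_⟩
  have h_each : ∀ n lam, P' {ω | 2 * K / ε < |X n lam ω|} ≤
      P' {ω | K < P'[fun ω' => |X n lam ω'| | G n] ω} + ENNReal.ofReal (ε / 2) := fun n lam => by
    have hKM : K / (2 * K / ε) = ε / 2 := by field_simp
    simpa only [hKM] using measure_lt_abs_le_measure_lt_condExp_add (hG n) (hX_int n lam) hK.le
      (by positivity : 0 < 2 * K / ε)
  calc (⨆ n, ⨆ lam, P' {ω | 2 * K / ε < |X n lam ω|})
      ≤ (⨆ n, ⨆ lam, P' {ω | K < P'[fun ω' => |X n lam ω'| | G n] ω}) + ENNReal.ofReal (ε / 2) :=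
        iSup₂_le fun n lam => (h_each n lam).trans <| by
          gcongr
          exact le_iSup₂ (f := fun n lam => P' {ω | K < P'[fun ω' => |X n lam ω'| | G n] ω}) n lam
    _ < ENNReal.ofReal (ε / 2) + ENNReal.ofReal (ε / 2) := by gcongr; exact ENNReal.ofReal_ne_top
    _ = ENNReal.ofReal ε := by
        rw [← ENNReal.ofReal_add (half_pos hε).le (half_pos hε).le, add_halves]
end

section
/- Let L, g ∈ ℕ with g ≥ 1, let (Ω̃, F̃, P̃) be a probability space with expectation Ẽ, and let (F̃_l)_{l=0}^{L} be a filtration of sub-σ-algebras of F̃. Let {X¹_k}_{k=1}^{L} and {X²_{k,k'}}_{1≤k,k'≤L} be real-valued random variables such that ( ∑_{k=1}^{l} X¹_k )_{l=0}^{L} is an (F̃_l)-martingale and, for each 1 ≤ k ≤ L, ( ∑_{k'=1}^{l} X²_{k,k'} )_{l=0}^{L} is an (F̃_l)-martingale. Suppose there exist a positive constant C¹ and positive numbers {C²_k}_{1≤k≤L} with Ẽ[|X¹_k|⁴]^{1/4} ≤ C¹ and Ẽ[|X²_{k,k'}|⁴]^{1/4} ≤ C²_{k'} for all 1 ≤ k,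 k' ≤ L. Then Ẽ[ | ∑_{k=1}^{L} X¹_k ∑_{k': 0<|k'-k|≤g} X²_{k,k'} | ] ≤ 2(2g+1) C¹ ( ∑_{1≤l₁,l₂≤L, |l₁-l₂|≤2g} C²_{l₁} C²_{l₂} )^{1/2}. -/
/-!
Write the sum as `S = ∑ X¹_k X²_{k,k'}` over the band `0 < |k - k'| ≤ g` and use
`E|S| ≤ √(E S²)`. In the expansion of `E S²`, a cross term `E[X¹_a X²_{a,b} X¹_c X²_{c,d}]` with
`|b - d| > 2g` vanishes: the largest of the four indices is then carried by a single factor, a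
martingale increment, and the other three factors are measurable before it. The remaining terms
are bounded by `C¹² C²_b C²_d` by Hölder's inequality, and each pair `(b, d)` comes from at most
`(2g + 1)²` pairs of band indices.
-/

open MeasureTheory Filter Finset

open scoped ENNReal

instance : ENNReal.HolderTriple 4 4 2 where
  inv_add_inv_eq_inv := by
    rw [show (4 : ℝ≥0∞) = 2 * 2 by norm_num, ENNReal.mul_inv (by simp) (by simp), ← add_mul,
      ENNReal.inv_two_add_inv_two, one_mul]

section Holder

variable {α : Type*} [MeasurableSpace α] {μ : Measure α}

theorem abs_integral_mul_le_sqrt_mul_sqrt {f g : α → ℝ} (hf : MemLp f 2 μ) (hg : MemLp g 2 μ) :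
    |∫ a, f a * g a ∂μ| ≤ √(∫ a, f a ^ 2 ∂μ) * √(∫ a, g a ^ 2 ∂μ) := by
  have sq_eq : ∀ h : α → ℝ, ∫ a, ‖h a‖ ^ (2 : ℝ) ∂μ = ∫ a, h a ^ 2 ∂μ := fun h =>
    integral_congr_ae (Eventually.of_forall fun a => by simp)
  have holder := integral_mul_norm_le_Lp_mul_Lq Real.HolderConjugate.two_two
    (by simpa using hf) (by simpa using hg)
  rw [sq_eq f, sq_eq g, ← Real.sqrt_eq_rpow, ← Real.sqrt_eq_rpow] at holder
  refine (abs_integral_le_integral_abs).trans (le_of_eq_of_le ?_ holder)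
  simp [abs_mul]

theorem integral_abs_le_sqrt_integral_sq [IsProbabilityMeasure μ] {f : α → ℝ} (hf : MemLp f 2 μ) :
    ∫ a, |f a| ∂μ ≤ √(∫ a, f a ^ 2 ∂μ) := by
  refine (le_abs_self _).trans ?_
  simpa using abs_integral_mul_le_sqrt_mul_sqrt hf.norm (memLp_const (1 : ℝ))

theorem sqrt_integral_mul_sq_le {f g : α → ℝ} (hf : MemLp f 4 μ) (hg : MemLp g 4 μ) :
    √(∫ a, (f a * g a) ^ 2 ∂μ)
      ≤ (∫ a, |f a| ^ 4 ∂μ) ^ ((1 : ℝ) / 4) * (∫ a, |g a| ^ 4 ∂μ) ^ ((1 : ℝ) / 4) := by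
  have sqrt_sqrt : ∀ x : ℝ, 0 ≤ x → √(√x) = x ^ ((1 : ℝ) / 4) := fun x hx => by
    rw [Real.sqrt_eq_rpow, Real.sqrt_eq_rpow, ← Real.rpow_mul hx]; norm_num
  have cs := abs_integral_mul_le_sqrt_mul_sqrt (hf.mul' hf) (hg.mul' hg)
  have abs_four : ∀ x : ℝ, (x * x) ^ 2 = |x| ^ 4 := fun x => by
    rw [pow_abs, abs_of_nonneg (by positivity)]; ring
  simp only [abs_four] at cs
  rw [← sqrt_sqrt _ (integral_nonneg fun _ => by positivity),
    ← sqrt_sqrt _ (integral_nonneg fun _ => by positivity), ← Real.sqrt_mul (Real.sqrt_nonneg _)]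
  refine Real.sqrt_le_sqrt (le_of_eq_of_le ?_ ((le_abs_self _).trans cs))
  congr 1; funext a; ring

theorem abs_integral_mul_mul_le {f₁ f₂ f₃ f₄ : α → ℝ} (h₁ : MemLp f₁ 4 μ) (h₂ : MemLp f₂ 4 μ)
    (h₃ : MemLp f₃ 4 μ) (h₄ : MemLp f₄ 4 μ) :
    |∫ a, f₁ a * f₂ a * (f₃ a * f₄ a) ∂μ|
      ≤ (∫ a, |f₁ a| ^ 4 ∂μ) ^ ((1 : ℝ) / 4) * (∫ a, |f₂ a| ^ 4 ∂μ) ^ ((1 : ℝ) / 4)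
        * ((∫ a, |f₃ a| ^ 4 ∂μ) ^ ((1 : ℝ) / 4) * (∫ a, |f₄ a| ^ 4 ∂μ) ^ ((1 : ℝ) / 4)) :=
  (abs_integral_mul_le_sqrt_mul_sqrt (h₂.mul' h₁) (h₄.mul' h₃)).trans <|
    mul_le_mul (sqrt_integral_mul_sq_le h₁ h₂) (sqrt_integral_mul_sq_le h₃ h₄)
      (Real.sqrt_nonneg _) (by positivity)

theorem integrable_mul_mul_of_memLp_four {f₁ f₂ f₃ f₄ : α → ℝ} (h₁ : MemLp f₁ 4 μ)
    (h₂ : MemLp f₂ 4 μ) (h₃ : MemLp f₃ 4 μ) (h₄ : MemLp f₄ 4 μ) :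
    Integrable (fun a => f₁ a * f₂ a * (f₃ a * f₄ a)) μ :=
  (h₂.mul' h₁ (r := 2)).integrable_mul (h₄.mul' h₃ (r := 2))

theorem integral_abs_sum_le_sqrt {ι : Type*} {s : Finset ι} {Z : ι → α → ℝ}
    [IsProbabilityMeasure μ] (hZ : ∀ i ∈ s, MemLp (Z i) 2 μ) :
    ∫ a, |∑ i ∈ s, Z i a| ∂μ ≤ √(∑ i ∈ s, ∑ j ∈ s, ∫ a, Z i a * Z j a ∂μ) := by
  have hint : ∀ i ∈ s, ∀ j ∈ s, Integrable (fun a => Z i a * Z j a) μ := fun i hi j hj =>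
    (hZ i hi).integrable_mul (hZ j hj)
  have expand : ∫ a, (∑ i ∈ s, Z i a) ^ 2 ∂μ = ∑ i ∈ s, ∑ j ∈ s, ∫ a, Z i a * Z j a ∂μ := by
    simp_rw [sq, sum_mul_sum]
    rw [integral_finsetSum _ fun i hi => integrable_finsetSum _ (hint i hi)]
    exact sum_congr rfl fun i hi => integral_finsetSum _ (hint i hi)
  rw [← expand]
  exact integral_abs_le_sqrt_integral_sq (memLp_finsetSum s hZ)

end Holder

theorem sum_Icc_one_sub_sum_Icc_one {M : Type*} [AddCommGroup M] (Y : ℕ → M) {k : ℕ}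
    (hk : 1 ≤ k) : ∑ j ∈ Icc 1 k, Y j - ∑ j ∈ Icc 1 (k - 1), Y j = Y k := by
  obtain ⟨n, rfl⟩ : ∃ n, k = n + 1 := ⟨k - 1, by omega⟩
  rw [sum_Icc_succ_top (by omega), Nat.add_sub_cancel, add_sub_cancel_left]

structure IsMartingaleDifference {Ω : Type*} [MeasurableSpace Ω] (P : Measure Ω)
    (ℱ : ℕ → MeasurableSpace Ω) (L : ℕ) (Y : ℕ → Ω → ℝ) : Prop where
  stronglyMeasurable : ∀ k ∈ Icc 1 L, StronglyMeasurable[ℱ k] (Y k)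
  condExp_ae_eq_zero : ∀ k ∈ Icc 1 L, ∀ t < k, P[Y k | ℱ t] =ᵐ[P] 0

section MartingaleDifference

variable {Ω : Type*} {ℱ : ℕ → MeasurableSpace Ω} {L : ℕ} {Y : ℕ → Ω → ℝ}

theorem IsMartingaleDifference.of_partialSums [MeasurableSpace Ω] {P : Measure Ω}
    (hℱ_mono : ∀ m l, m ≤ l → l ≤ L → ℱ m ≤ ℱ l)
    (hadp : ∀ l, l ≤ L → StronglyMeasurable[ℱ l] (fun ω => ∑ j ∈ Icc 1 l, Y j ω))
    (hint : ∀ k ∈ Icc 1 L, Integrable (Y k) P)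
    (hmart : ∀ m l : ℕ, m ≤ l → l ≤ L →
      P[(fun ω => ∑ j ∈ Icc 1 l, Y j ω) | ℱ m] =ᵐ[P] (fun ω => ∑ j ∈ Icc 1 m, Y j ω)) :
    IsMartingaleDifference P ℱ L Y := by
  have hY : ∀ k ∈ Icc 1 L,
      Y k = (fun ω => ∑ j ∈ Icc 1 k, Y j ω) - fun ω => ∑ j ∈ Icc 1 (k - 1), Y j ω :=
    fun k hk => funext fun ω => by
      simp only [Pi.sub_apply, sum_Icc_one_sub_sum_Icc_one (Y · ω) (mem_Icc.1 hk).1]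
  have hint_sum : ∀ l ≤ L, Integrable (fun ω => ∑ j ∈ Icc 1 l, Y j ω) P := fun l hl =>
    integrable_finsetSum _ fun j hj => hint j (Icc_subset_Icc_right hl hj)
  refine ⟨fun k hk => ?_, fun k hk t htk => ?_⟩ <;>
    obtain ⟨hk1, hkL⟩ := mem_Icc.1 hk <;> rw [hY k hk]
  · exact (hadp k hkL).sub ((hadp (k - 1) (by omega)).mono (hℱ_mono _ k (by omega) hkL))
  · filter_upwards [condExp_sub (m := ℱ t) (hint_sum k hkL) (hint_sum (k - 1) (by omega)),
      hmart t k htk.le hkL, hmart t (k - 1) (by omega) (by omega)] with ω hsub h₁ h₂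
    simp [hsub, h₁, h₂]

theorem integral_mul_eq_zero_of_condExp_ae_eq_zero [m0 : MeasurableSpace Ω] {P : Measure Ω}
    [IsFiniteMeasure P] {𝒢 : MeasurableSpace Ω}
    (h𝒢 : 𝒢 ≤ m0) {f d : Ω → ℝ} (hf : StronglyMeasurable[𝒢] f)
    (hfd : Integrable (fun ω => f ω * d ω) P) (hd : Integrable d P) (hcond : P[d | 𝒢] =ᵐ[P] 0) :
    ∫ ω, f ω * d ω ∂P = 0 := by
  rw [← integral_condExp h𝒢]
  refine (integral_congr_ae ?_).trans (integral_zero Ω ℝ)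
  filter_upwards [condExp_mul_of_stronglyMeasurable_left hf hfd hd, hcond] with ω h₁ h₂
  exact h₁.trans (by simp [h₂])

end MartingaleDifference

def offDiagBand (L g : ℕ) : Finset (ℕ × ℕ) :=
  (Icc 1 L ×ˢ Icc 1 L).filter fun p => p.2 ≠ p.1 ∧ p.2 ≤ p.1 + g ∧ p.1 ≤ p.2 + g

section OffDiagBand

variable {L g : ℕ}

theorem mem_offDiagBand {p : ℕ × ℕ} :
    p ∈ offDiagBand L g ↔
      (p.1 ∈ Icc 1 L ∧ p.2 ∈ Icc 1 L) ∧ p.2 ≠ p.1 ∧ p.2 ≤ p.1 + g ∧ p.1 ≤ p.2 + g := by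
  rw [offDiagBand, mem_filter, mem_product]

theorem sum_sum_filter_eq_sum_offDiagBand {M : Type*} [AddCommMonoid M] (f : ℕ → ℕ → M) :
    ∑ k ∈ Icc 1 L, ∑ k' ∈ (Icc 1 L).filter (fun k' => k' ≠ k ∧ k' ≤ k + g ∧ k ≤ k' + g), f k k'
      = ∑ p ∈ offDiagBand L g, f p.1 p.2 := by
  rw [offDiagBand, sum_filter, sum_product]
  exact sum_congr rfl fun k _ => sum_filter _ _

theorem card_filter_snd_offDiagBand_le (l : ℕ) : #{p ∈ offDiagBand L g | p.2 = l} ≤ 2 * g + 1 :=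
  calc #{p ∈ offDiagBand L g | p.2 = l}
      ≤ #(Icc (l - g) (l + g) ×ˢ {l}) := card_le_card fun p hp => by
        simp only [mem_filter, mem_offDiagBand, mem_product, mem_Icc, mem_singleton] at hp ⊢
        omega
    _ ≤ 2 * g + 1 := by simp only [card_product, Nat.card_Icc, card_singleton]; omega

theorem sum_offDiagBand_le {G : ℕ → ℝ} (hG : ∀ l ∈ Icc 1 L, 0 ≤ G l) :
    ∑ p ∈ offDiagBand L g, G p.2 ≤ (2 * g + 1) * ∑ l ∈ Icc 1 L, G l := by
  have hmaps : ∀ p ∈ offDiagBand L g, p.2 ∈ Icc 1 L := fun p hp => (mem_offDiagBand.1 hp).1.2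
  calc ∑ p ∈ offDiagBand L g, G p.2
      = ∑ l ∈ Icc 1 L, ∑ p ∈ offDiagBand L g with p.2 = l, G p.2 :=
        (sum_fiberwise_of_maps_to hmaps _).symm
    _ = ∑ l ∈ Icc 1 L, #{p ∈ offDiagBand L g | p.2 = l} * G l := by
        refine sum_congr rfl fun l _ => ?_
        rw [sum_congr rfl fun p hp => by rw [(mem_filter.1 hp).2], sum_const, nsmul_eq_mul]
    _ ≤ ∑ l ∈ Icc 1 L, (2 * g + 1) * G l := by
        gcongr with l hl
        · exact hG l hl
        · exact_mod_cast card_filter_snd_offDiagBand_le l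
    _ = (2 * g + 1) * ∑ l ∈ Icc 1 L, G l := (mul_sum _ _ _).symm

theorem sum_sum_offDiagBand_le {w : ℕ → ℕ → ℝ} (hw : ∀ l₁ ∈ Icc 1 L, ∀ l₂ ∈ Icc 1 L, 0 ≤ w l₁ l₂) :
    ∑ p ∈ offDiagBand L g, ∑ q ∈ offDiagBand L g, w p.2 q.2
      ≤ (2 * g + 1) ^ 2 * ∑ l₁ ∈ Icc 1 L, ∑ l₂ ∈ Icc 1 L, w l₁ l₂ :=
  calc ∑ p ∈ offDiagBand L g, ∑ q ∈ offDiagBand L g, w p.2 q.2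
      ≤ ∑ p ∈ offDiagBand L g, (2 * g + 1) * ∑ l₂ ∈ Icc 1 L, w p.2 l₂ :=
        sum_le_sum fun p hp => sum_offDiagBand_le (hw p.2 (mem_offDiagBand.1 hp).1.2)
    _ = (2 * g + 1) * ∑ p ∈ offDiagBand L g, ∑ l₂ ∈ Icc 1 L, w p.2 l₂ := (mul_sum _ _ _).symm
    _ ≤ (2 * g + 1) * ((2 * g + 1) * ∑ l₁ ∈ Icc 1 L, ∑ l₂ ∈ Icc 1 L, w l₁ l₂) := by
        gcongr
        exact sum_offDiagBand_le fun l₁ hl₁ => sum_nonneg (hw l₁ hl₁)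
    _ = (2 * g + 1) ^ 2 * ∑ l₁ ∈ Icc 1 L, ∑ l₂ ∈ Icc 1 L, w l₁ l₂ := by ring

end OffDiagBand

section FourFoldProducts

variable {Ω : Type*} [m0 : MeasurableSpace Ω] {P : Measure Ω}
  {ℱ : ℕ → MeasurableSpace Ω} {L : ℕ} {X1 : ℕ → Ω → ℝ} {X2 : ℕ → ℕ → Ω → ℝ}

theorem integral_mul_mul_eq_zero_of_lt_max [IsFiniteMeasure P] (hℱ_le : ∀ l, l ≤ L → ℱ l ≤ m0)
    (hℱ_mono : ∀ m l, m ≤ l → l ≤ L → ℱ m ≤ ℱ l)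
    (hX1 : IsMartingaleDifference P ℱ L X1)
    (hX2 : ∀ k ∈ Icc 1 L, IsMartingaleDifference P ℱ L (X2 k))
    (hLp1 : ∀ k ∈ Icc 1 L, MemLp (X1 k) 4 P)
    (hLp2 : ∀ k ∈ Icc 1 L, ∀ k' ∈ Icc 1 L, MemLp (X2 k k') 4 P)
    {a b c d : ℕ} (ha : a ∈ Icc 1 L) (hb : b ∈ Icc 1 L) (hc : c ∈ Icc 1 L) (hd : d ∈ Icc 1 L)
    (hac : a < max c d) (hbc : b < max c d) (hcd : c ≠ d) :
    ∫ ω, X1 a ω * X2 a b ω * (X1 c ω * X2 c d ω) ∂P = 0 := by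
  have hint := integrable_mul_mul_of_memLp_four (hLp1 a ha) (hLp2 a ha b hb) (hLp1 c hc)
    (hLp2 c hc d hd)
  have past1 : ∀ {k t : ℕ}, k ∈ Icc 1 L → k ≤ t → t ≤ L → StronglyMeasurable[ℱ t] (X1 k) :=
    fun hk hkt htL => (hX1.stronglyMeasurable _ hk).mono (hℱ_mono _ _ hkt htL)
  have past2 : ∀ {k k' t : ℕ}, k ∈ Icc 1 L → k' ∈ Icc 1 L → k' ≤ t → t ≤ L →
      StronglyMeasurable[ℱ t] (X2 k k') :=
    fun hk hk' hkt htL => ((hX2 _ hk).stronglyMeasurable _ hk').mono (hℱ_mono _ _ hkt htL)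
  have hcL := (mem_Icc.1 hc).2
  have hdL := (mem_Icc.1 hd).2
  rcases hcd.lt_or_gt with hlt | hgt
  · rw [max_eq_right hlt.le] at hac hbc
    have hsm : StronglyMeasurable[ℱ (d - 1)] (fun ω => X1 a ω * X2 a b ω * X1 c ω) :=
      ((past1 ha (by omega) (by omega)).mul (past2 ha hb (by omega) (by omega))).mul
        (past1 hc (by omega) (by omega))
    calc ∫ ω, X1 a ω * X2 a b ω * (X1 c ω * X2 c d ω) ∂P
        = ∫ ω, X1 a ω * X2 a b ω * X1 c ω * X2 c d ω ∂P :=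
          integral_congr_ae (ae_of_all _ fun ω => by ring)
      _ = 0 := integral_mul_eq_zero_of_condExp_ae_eq_zero (hℱ_le _ (by omega)) hsm
          (hint.congr (ae_of_all _ fun ω => by ring)) ((hLp2 c hc d hd).integrable (by norm_num))
          ((hX2 c hc).condExp_ae_eq_zero d hd _ (by omega))
  · rw [max_eq_left hgt.le] at hac hbc
    have hsm : StronglyMeasurable[ℱ (c - 1)] (fun ω => X1 a ω * X2 a b ω * X2 c d ω) :=
      ((past1 ha (by omega) (by omega)).mul (past2 ha hb (by omega) (by omega))).mul
        (past2 hc hd (by omega) (by omega))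
    calc ∫ ω, X1 a ω * X2 a b ω * (X1 c ω * X2 c d ω) ∂P
        = ∫ ω, X1 a ω * X2 a b ω * X2 c d ω * X1 c ω ∂P :=
          integral_congr_ae (ae_of_all _ fun ω => by ring)
      _ = 0 := integral_mul_eq_zero_of_condExp_ae_eq_zero (hℱ_le _ (by omega)) hsm
          (hint.congr (ae_of_all _ fun ω => by ring)) ((hLp1 c hc).integrable (by norm_num))
          (hX1.condExp_ae_eq_zero c hc _ (by omega))

theorem integral_mul_mul_le_of_moment_le {C1 : ℝ} {C2 : ℕ → ℝ}
    (hLp1 : ∀ k ∈ Icc 1 L, MemLp (X1 k) 4 P)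
    (hLp2 : ∀ k ∈ Icc 1 L, ∀ k' ∈ Icc 1 L, MemLp (X2 k k') 4 P)
    (hmom1 : ∀ k ∈ Icc 1 L, (∫ ω, |X1 k ω| ^ 4 ∂P) ^ ((1 : ℝ) / 4) ≤ C1)
    (hmom2 : ∀ k ∈ Icc 1 L, ∀ k' ∈ Icc 1 L,
      (∫ ω, |X2 k k' ω| ^ 4 ∂P) ^ ((1 : ℝ) / 4) ≤ C2 k')
    {a b c d : ℕ} (ha : a ∈ Icc 1 L) (hb : b ∈ Icc 1 L) (hc : c ∈ Icc 1 L) (hd : d ∈ Icc 1 L) :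
    ∫ ω, X1 a ω * X2 a b ω * (X1 c ω * X2 c d ω) ∂P ≤ C1 ^ 2 * (C2 b * C2 d) := by
  have moment_nonneg : ∀ f : Ω → ℝ, 0 ≤ (∫ ω, |f ω| ^ 4 ∂P) ^ ((1 : ℝ) / 4) := fun f =>
    Real.rpow_nonneg (integral_nonneg fun _ => by positivity) _
  calc ∫ ω, X1 a ω * X2 a b ω * (X1 c ω * X2 c d ω) ∂P
      ≤ |∫ ω, X1 a ω * X2 a b ω * (X1 c ω * X2 c d ω) ∂P| := le_abs_self _
    _ ≤ _ := abs_integral_mul_mul_le (hLp1 a ha) (hLp2 a ha b hb) (hLp1 c hc) (hLp2 c hc d hd)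
    _ ≤ C1 * C2 b * (C1 * C2 d) := by
        have := (moment_nonneg _).trans (hmom1 a ha)
        have := (moment_nonneg _).trans (hmom2 a ha b hb)
        gcongr
        exacts [hmom1 a ha, hmom2 a ha b hb, hmom1 c hc, hmom2 c hc d hd]
    _ = C1 ^ 2 * (C2 b * C2 d) := by ring

theorem sum_sum_integral_mul_mul_le [IsFiniteMeasure P] {g : ℕ} {C1 : ℝ} {C2 : ℕ → ℝ}
    (hℱ_le : ∀ l, l ≤ L → ℱ l ≤ m0) (hℱ_mono : ∀ m l, m ≤ l → l ≤ L → ℱ m ≤ ℱ l)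
    (hX1 : IsMartingaleDifference P ℱ L X1)
    (hX2 : ∀ k ∈ Icc 1 L, IsMartingaleDifference P ℱ L (X2 k))
    (hLp1 : ∀ k ∈ Icc 1 L, MemLp (X1 k) 4 P)
    (hLp2 : ∀ k ∈ Icc 1 L, ∀ k' ∈ Icc 1 L, MemLp (X2 k k') 4 P)
    (hmom1 : ∀ k ∈ Icc 1 L, (∫ ω, |X1 k ω| ^ 4 ∂P) ^ ((1 : ℝ) / 4) ≤ C1)
    (hmom2 : ∀ k ∈ Icc 1 L, ∀ k' ∈ Icc 1 L,
      (∫ ω, |X2 k k' ω| ^ 4 ∂P) ^ ((1 : ℝ) / 4) ≤ C2 k')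
    (hC2 : ∀ k ∈ Icc 1 L, 0 ≤ C2 k) :
    ∑ p ∈ offDiagBand L g, ∑ q ∈ offDiagBand L g,
        ∫ ω, X1 p.1 ω * X2 p.1 p.2 ω * (X1 q.1 ω * X2 q.1 q.2 ω) ∂P
      ≤ ((2 * g + 1) * C1) ^ 2 * ∑ l₁ ∈ Icc 1 L,
          ∑ l₂ ∈ (Icc 1 L).filter (fun l₂ => l₂ ≤ l₁ + 2 * g ∧ l₁ ≤ l₂ + 2 * g), C2 l₁ * C2 l₂ := by
  set w : ℕ → ℕ → ℝ := fun l₁ l₂ =>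
    if l₂ ≤ l₁ + 2 * g ∧ l₁ ≤ l₂ + 2 * g then C1 ^ 2 * (C2 l₁ * C2 l₂) else 0
  have hw : ∀ l₁ ∈ Icc 1 L, ∀ l₂ ∈ Icc 1 L, 0 ≤ w l₁ l₂ := fun l₁ hl₁ l₂ hl₂ => by
    have := hC2 l₁ hl₁
    have := hC2 l₂ hl₂
    simp only [w]
    split_ifs <;> positivity
  have hterm : ∀ p ∈ offDiagBand L g, ∀ q ∈ offDiagBand L g,
      ∫ ω, X1 p.1 ω * X2 p.1 p.2 ω * (X1 q.1 ω * X2 q.1 q.2 ω) ∂P ≤ w p.2 q.2 := by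
    intro p hp q hq
    obtain ⟨⟨ha, hb⟩, hba, hb₁, hb₂⟩ := mem_offDiagBand.1 hp
    obtain ⟨⟨hc, hd⟩, hdc, hd₁, hd₂⟩ := mem_offDiagBand.1 hq
    simp only [w]
    split_ifs with hnear
    · exact integral_mul_mul_le_of_moment_le hLp1 hLp2 hmom1 hmom2 ha hb hc hd
    refine le_of_eq ?_
    rcases not_and_or.1 hnear with hfar | hfar
    · exact integral_mul_mul_eq_zero_of_lt_max hℱ_le hℱ_mono hX1 hX2 hLp1 hLp2
        ha hb hc hd (by omega) (by omega) hdc.symm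
    · rw [integral_congr_ae (ae_of_all _ fun ω => mul_comm _ _)]
      exact integral_mul_mul_eq_zero_of_lt_max hℱ_le hℱ_mono hX1 hX2 hLp1 hLp2
        hc hd ha hb (by omega) (by omega) hba.symm
  calc _ ≤ ∑ p ∈ offDiagBand L g, ∑ q ∈ offDiagBand L g, w p.2 q.2 :=
        sum_le_sum fun p hp => sum_le_sum fun q hq => hterm p hp q hq
    _ ≤ (2 * g + 1) ^ 2 * ∑ l₁ ∈ Icc 1 L, ∑ l₂ ∈ Icc 1 L, w l₁ l₂ := sum_sum_offDiagBand_le hw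
    _ = _ := by
        simp only [w, mul_sum, sum_filter]
        refine sum_congr rfl fun _ _ => sum_congr rfl fun _ _ => ?_
        split_ifs <;> ring

end FourFoldProducts

theorem martingale_product_L1_bound_two_index_general
    {Ω : Type*} [m0 : MeasurableSpace Ω] (P : Measure Ω) [IsProbabilityMeasure P]
    (L g : ℕ) (ℱ : ℕ → MeasurableSpace Ω)
    (hℱ_le : ∀ l, l ≤ L → ℱ l ≤ m0)
    (hℱ_mono : ∀ m l, m ≤ l → l ≤ L → ℱ m ≤ ℱ l)
    (X1 : ℕ → Ω → ℝ) (X2 : ℕ → ℕ → Ω → ℝ) (C1 : ℝ) (C2 : ℕ → ℝ)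
    (hC1_pos : 0 < C1) (hC2_pos : ∀ k ∈ Finset.Icc 1 L, 0 < C2 k)
    (hadp1 : ∀ l, l ≤ L → StronglyMeasurable[ℱ l] (fun ω => ∑ k ∈ Finset.Icc 1 l, X1 k ω))
    (hint1 : ∀ k ∈ Finset.Icc 1 L, Integrable (X1 k) P)
    (hmart1 : ∀ m l : ℕ, m ≤ l → l ≤ L →
      P[(fun ω => ∑ k ∈ Finset.Icc 1 l, X1 k ω) | ℱ m]
        =ᵐ[P] (fun ω => ∑ k ∈ Finset.Icc 1 m, X1 k ω))
    (hadp2 : ∀ k ∈ Finset.Icc 1 L, ∀ l, l ≤ L →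
      StronglyMeasurable[ℱ l] (fun ω => ∑ k' ∈ Finset.Icc 1 l, X2 k k' ω))
    (hint2 : ∀ k ∈ Finset.Icc 1 L, ∀ k' ∈ Finset.Icc 1 L, Integrable (X2 k k') P)
    (hmart2 : ∀ k ∈ Finset.Icc 1 L, ∀ m l : ℕ, m ≤ l → l ≤ L →
      P[(fun ω => ∑ k' ∈ Finset.Icc 1 l, X2 k k' ω) | ℱ m]
        =ᵐ[P] (fun ω => ∑ k' ∈ Finset.Icc 1 m, X2 k k' ω))
    (hLp1 : ∀ k ∈ Finset.Icc 1 L, MemLp (X1 k) 4 P)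
    (hLp2 : ∀ k ∈ Finset.Icc 1 L, ∀ k' ∈ Finset.Icc 1 L, MemLp (X2 k k') 4 P)
    (hmom1 : ∀ k ∈ Finset.Icc 1 L, (∫ ω, |X1 k ω| ^ 4 ∂P) ^ ((1 : ℝ) / 4) ≤ C1)
    (hmom2 : ∀ k ∈ Finset.Icc 1 L, ∀ k' ∈ Finset.Icc 1 L,
      (∫ ω, |X2 k k' ω| ^ 4 ∂P) ^ ((1 : ℝ) / 4) ≤ C2 k') :
    ∫ ω, |∑ k ∈ Finset.Icc 1 L, X1 k ω *
        ∑ k' ∈ (Finset.Icc 1 L).filter (fun k' => k' ≠ k ∧ k' ≤ k + g ∧ k ≤ k' + g),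
          X2 k k' ω| ∂P
      ≤ 2 * (2 * (g : ℝ) + 1) * C1 *
          Real.sqrt (∑ l₁ ∈ Finset.Icc 1 L,
            ∑ l₂ ∈ (Finset.Icc 1 L).filter (fun l₂ => l₂ ≤ l₁ + 2 * g ∧ l₁ ≤ l₂ + 2 * g),
              C2 l₁ * C2 l₂) := by
  set Q := ∑ l₁ ∈ Icc 1 L, ∑ l₂ ∈ (Icc 1 L).filter (fun l₂ => l₂ ≤ l₁ + 2 * g ∧ l₁ ≤ l₂ + 2 * g),
    C2 l₁ * C2 l₂
  have hsecond := sum_sum_integral_mul_mul_le (g := g) hℱ_le hℱ_mono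
    (.of_partialSums hℱ_mono hadp1 hint1 hmart1)
    (fun k hk => .of_partialSums hℱ_mono (hadp2 k hk) (hint2 k hk) (hmart2 k hk))
    hLp1 hLp2 hmom1 hmom2 fun k hk => (hC2_pos k hk).le
  have hZ : ∀ p ∈ offDiagBand L g, MemLp (fun ω => X1 p.1 ω * X2 p.1 p.2 ω) 2 P := fun p hp => by
    obtain ⟨⟨hk, hk'⟩, -⟩ := mem_offDiagBand.1 hp
    exact (hLp2 _ hk _ hk').mul' (hLp1 _ hk)
  calc ∫ ω, |∑ k ∈ Icc 1 L, X1 k ω *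
        ∑ k' ∈ (Icc 1 L).filter (fun k' => k' ≠ k ∧ k' ≤ k + g ∧ k ≤ k' + g), X2 k k' ω| ∂P
      = ∫ ω, |∑ p ∈ offDiagBand L g, X1 p.1 ω * X2 p.1 p.2 ω| ∂P := by
        simp_rw [mul_sum, sum_sum_filter_eq_sum_offDiagBand]
    _ ≤ √(((2 * g + 1) * C1) ^ 2 * Q) :=
        (integral_abs_sum_le_sqrt hZ).trans (Real.sqrt_le_sqrt hsecond)
    _ = (2 * g + 1) * C1 * √Q := by rw [Real.sqrt_mul (sq_nonneg _), Real.sqrt_sq (by positivity)]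
    _ ≤ 2 * (2 * g + 1) * C1 * √Q := by
        have : 0 ≤ (2 * g + 1) * C1 * √Q := by positivity
        linarith

/-- Lemma A.1.2 (Ogihara, LAMN for nonsynchronously observed diffusions):
an `L¹` bound for `∑_k X¹_k ∑_{0<|k'-k|≤g} X²_{k,k'}` when the partial sums of
`X¹` and of each row of `X²` are martingales, in terms of `L⁴` bounds. -/
theorem martingale_product_L1_bound_two_index
    {Ω : Type*} [m0 : MeasurableSpace Ω] (P : Measure Ω) [IsProbabilityMeasure P]
    (L g : ℕ) (hg : 1 ≤ g) (ℱ : ℕ → MeasurableSpace Ω)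
    (hℱ_le : ∀ l, l ≤ L → ℱ l ≤ m0)
    (hℱ_mono : ∀ m l, m ≤ l → l ≤ L → ℱ m ≤ ℱ l)
    (X1 : ℕ → Ω → ℝ) (X2 : ℕ → ℕ → Ω → ℝ) (C1 : ℝ) (C2 : ℕ → ℝ)
    (hC1_pos : 0 < C1) (hC2_pos : ∀ k ∈ Finset.Icc 1 L, 0 < C2 k)
    (hadp1 : ∀ l, l ≤ L → StronglyMeasurable[ℱ l] (fun ω => ∑ k ∈ Finset.Icc 1 l, X1 k ω))
    (hint1 : ∀ k ∈ Finset.Icc 1 L, Integrable (X1 k) P)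
    (hmart1 : ∀ m l : ℕ, m ≤ l → l ≤ L →
      P[(fun ω => ∑ k ∈ Finset.Icc 1 l, X1 k ω) | ℱ m]
        =ᵐ[P] (fun ω => ∑ k ∈ Finset.Icc 1 m, X1 k ω))
    (hadp2 : ∀ k ∈ Finset.Icc 1 L, ∀ l, l ≤ L →
      StronglyMeasurable[ℱ l] (fun ω => ∑ k' ∈ Finset.Icc 1 l, X2 k k' ω))
    (hint2 : ∀ k ∈ Finset.Icc 1 L, ∀ k' ∈ Finset.Icc 1 L, Integrable (X2 k k') P)
    (hmart2 : ∀ k ∈ Finset.Icc 1 L, ∀ m l : ℕ, m ≤ l → l ≤ L →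
      P[(fun ω => ∑ k' ∈ Finset.Icc 1 l, X2 k k' ω) | ℱ m]
        =ᵐ[P] (fun ω => ∑ k' ∈ Finset.Icc 1 m, X2 k k' ω))
    (hLp1 : ∀ k ∈ Finset.Icc 1 L, MemLp (X1 k) 4 P)
    (hLp2 : ∀ k ∈ Finset.Icc 1 L, ∀ k' ∈ Finset.Icc 1 L, MemLp (X2 k k') 4 P)
    (hmom1 : ∀ k ∈ Finset.Icc 1 L, (∫ ω, |X1 k ω| ^ 4 ∂P) ^ ((1 : ℝ) / 4) ≤ C1)
    (hmom2 : ∀ k ∈ Finset.Icc 1 L, ∀ k' ∈ Finset.Icc 1 L,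
      (∫ ω, |X2 k k' ω| ^ 4 ∂P) ^ ((1 : ℝ) / 4) ≤ C2 k') :
    ∫ ω, |∑ k ∈ Finset.Icc 1 L, X1 k ω *
        ∑ k' ∈ (Finset.Icc 1 L).filter (fun k' => k' ≠ k ∧ k' ≤ k + g ∧ k ≤ k' + g),
          X2 k k' ω| ∂P
      ≤ 2 * (2 * (g : ℝ) + 1) * C1 *
          Real.sqrt (∑ l₁ ∈ Finset.Icc 1 L,
            ∑ l₂ ∈ (Finset.Icc 1 L).filter (fun l₂ => l₂ ≤ l₁ + 2 * g ∧ l₁ ≤ l₂ + 2 * g),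
              C2 l₁ * C2 l₂) :=
  martingale_product_L1_bound_two_index_general (m0 := m0) P L g ℱ hℱ_le hℱ_mono X1 X2 C1 C2 hC1_pos
    hC2_pos hadp1 hint1 hmart1 hadp2 hint2 hmart2 hLp1 hLp2 hmom1 hmom2
end

section
/- Let A = {A_{ij}}_{i,j=1}^{2} be a 2×2 real symmetric matrix, let V₁ be a 2×2 real symmetric positive definite matrix, let α, β ∈ ℝ, and let v₂ > 0. Then for all x₁, x₂, y₂, w ∈ ℝ: ∫_ℝ (x₁−y₁+α, x₂−y₂+β) A (x₁−y₁+α, x₂−y₂+β)ᵀ φ₂((x₁−y₁, x₂−y₂)ᵀ; V₁) φ₁(y₁−w; v₂) dy₁ = { (W, x₂−y₂+β) A (W, x₂−y₂+β)ᵀ + A₁₁ / ((V₁⁻¹)₁₁ + v₂⁻¹) } · ∫_ℝ φ₂((x₁−y₁, x₂−y₂)ᵀ; V₁) φ₁(y₁−w; v₂) dy₁, where W = ( v₂⁻¹(x₁−w) − (V₁⁻¹)₁₂(x₂−y₂) ) / ( (V₁⁻¹)₁₁ + v₂⁻¹ ) + α and (V₁⁻¹)_{ij} denotes the (i,j) entry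 of the inverse matrix V₁⁻¹. -/
open MeasureTheory Matrix

/-- Density of the centered bivariate Gaussian distribution with covariance
matrix `V`, evaluated at `x ∈ ℝ²`. -/
noncomputable def gaussianDensity2 (V : Matrix (Fin 2) (Fin 2) ℝ) (x : Fin 2 → ℝ) : ℝ :=
  (2 * Real.pi)⁻¹ * (Real.sqrt V.det)⁻¹ * Real.exp (-(x ⬝ᵥ V⁻¹.mulVec x) / 2)

/-- Density of the centered one-dimensional Gaussian distribution with
variance `v`, evaluated at `y ∈ ℝ`. -/
noncomputable def gaussianDensity1 (v : ℝ) (y : ℝ) : ℝ :=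
  (Real.sqrt (2 * Real.pi * v))⁻¹ * Real.exp (-(y ^ 2) / (2 * v))

/-!
Completing the square in `y₁` turns the product of the two densities into a constant multiple of
the Gaussian kernel `exp (-c (y₁ - m)² / 2)` with precision `c = (V₁⁻¹)₁₁ + v₂⁻¹` and mean
`m = ((V₁⁻¹)₁₁ x₁ + (V₁⁻¹)₁₂ (x₂ - y₂) + v₂⁻¹ w) / c`, and `W = x₁ - m + α`. Around `y₁ = m` the
quadratic form is `A₁₁ (y₁ - m)² + q (y₁ - m) + r` with `r` its value at `(W, x₂ - y₂ + β)`; against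
this kernel the odd term integrates to zero and `(y₁ - m)²` to `1 / c` times the mass.
-/

open Real

theorem integral_mul_exp_neg_mul_sq_eq_zero (b : ℝ) : ∫ x : ℝ, x * exp (-b * x ^ 2) = 0 := by
  have hodd : ∫ x : ℝ, -x * exp (-b * (-x) ^ 2) = -∫ x : ℝ, x * exp (-b * x ^ 2) := by
    simp only [neg_sq, neg_mul, integral_neg]
  rw [integral_neg_eq_self (fun x : ℝ => x * exp (-b * x ^ 2))] at hodd
  linarith

theorem integrable_sq_mul_exp_neg_mul_sq {b : ℝ} (hb : 0 < b) :
    Integrable (fun x : ℝ => x ^ 2 * exp (-b * x ^ 2)) := by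
  simpa only [rpow_two] using integrable_rpow_mul_exp_neg_mul_sq hb (s := 2) (by norm_num)

theorem integral_sq_mul_exp_neg_mul_sq {b : ℝ} (hb : 0 < b) :
    ∫ x : ℝ, x ^ 2 * exp (-b * x ^ 2) = (2 * b)⁻¹ * ∫ x : ℝ, exp (-b * x ^ 2) := by
  -- integration by parts against `d/dx exp (-b x²) = -2 b x exp (-b x²)`
  have hderiv : ∀ x : ℝ, HasDerivAt (fun x => -(2 * b)⁻¹ * (x * exp (-b * x ^ 2)))
      (x ^ 2 * exp (-b * x ^ 2) - (2 * b)⁻¹ * exp (-b * x ^ 2)) x := by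
    intro x
    have hexp := ((hasDerivAt_pow 2 x).const_mul (-b)).exp
    refine (((hasDerivAt_id' x).mul hexp).const_mul (-(2 * b)⁻¹)).congr_deriv ?_
    field_simp
    ring
  have hsq := integrable_sq_mul_exp_neg_mul_sq hb
  have hexp := (integrable_exp_neg_mul_sq hb).const_mul (2 * b)⁻¹
  have hzero := integral_eq_zero_of_hasDerivAt_of_integrable hderiv (hsq.sub hexp)
    ((integrable_mul_exp_neg_mul_sq hb).const_mul _)
  rw [integral_sub hsq hexp, integral_const_mul] at hzero
  linarith

theorem integral_quadratic_mul_exp_neg_mul_sq {c : ℝ} (hc : 0 < c) (K m p q r : ℝ) :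
    ∫ y : ℝ, (p * (y - m) ^ 2 + q * (y - m) + r) * (K * exp (-(c * (y - m) ^ 2) / 2))
      = (r + p / c) * ∫ y : ℝ, K * exp (-(c * (y - m) ^ 2) / 2) := by
  have hc2 : 0 < c / 2 := half_pos hc
  have hkernel : ∀ z : ℝ, -(c * z ^ 2) / 2 = -(c / 2) * z ^ 2 := fun z => by ring
  rw [integral_sub_right_eq_self
      (fun z => (p * z ^ 2 + q * z + r) * (K * exp (-(c * z ^ 2) / 2))) m,
    integral_sub_right_eq_self (fun z => K * exp (-(c * z ^ 2) / 2)) m]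
  simp_rw [hkernel]
  have hsplit : (fun z : ℝ => (p * z ^ 2 + q * z + r) * (K * exp (-(c / 2) * z ^ 2)))
      = fun z => (K * p) * (z ^ 2 * exp (-(c / 2) * z ^ 2))
        + ((K * q) * (z * exp (-(c / 2) * z ^ 2)) + (K * r) * exp (-(c / 2) * z ^ 2)) := by
    funext z; ring
  have h2 := (integrable_sq_mul_exp_neg_mul_sq hc2).const_mul (K * p)
  have h1 := (integrable_mul_exp_neg_mul_sq hc2).const_mul (K * q)
  have h0 := (integrable_exp_neg_mul_sq hc2).const_mul (K * r)
  have h10 : Integrable (fun z : ℝ =>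
      (K * q) * (z * exp (-(c / 2) * z ^ 2)) + (K * r) * exp (-(c / 2) * z ^ 2)) := h1.add h0
  rw [hsplit, integral_add h2 h10, integral_add h1 h0, integral_const_mul,
    integral_const_mul, integral_const_mul, integral_const_mul,
    integral_mul_exp_neg_mul_sq_eq_zero, integral_sq_mul_exp_neg_mul_sq hc2]
  field_simp
  ring

section QuadraticForm

variable {R : Type*} [CommRing R]

theorem vec2_dotProduct_mulVec (M : Matrix (Fin 2) (Fin 2) R) (a b : R) :
    ![a, b] ⬝ᵥ M *ᵥ ![a, b] = M 0 0 * a ^ 2 + (M 0 1 + M 1 0) * a * b + M 1 1 * b ^ 2 := by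
  simp only [mulVec, dotProduct, Fin.sum_univ_two, cons_val_zero, cons_val_one]
  ring

theorem vec2_dotProduct_mulVec_sub_fst (M : Matrix (Fin 2) (Fin 2) R) (a b z : R) :
    ![a - z, b] ⬝ᵥ M *ᵥ ![a - z, b]
      = M 0 0 * z ^ 2 - (2 * M 0 0 * a + (M 0 1 + M 1 0) * b) * z + ![a, b] ⬝ᵥ M *ᵥ ![a, b] := by
  rw [vec2_dotProduct_mulVec, vec2_dotProduct_mulVec]
  ring

end QuadraticForm

theorem exists_gaussianDensity2_mul_gaussianDensity1_eq {V : Matrix (Fin 2) (Fin 2) ℝ}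
    (hV : V.IsSymm) {v : ℝ} (hc : V⁻¹ 0 0 + v⁻¹ ≠ 0) (x₁ s w : ℝ) :
    ∃ K : ℝ, ∀ y : ℝ, gaussianDensity2 V ![x₁ - y, s] * gaussianDensity1 v (y - w)
      = K * exp (-((V⁻¹ 0 0 + v⁻¹) *
          (y - (V⁻¹ 0 0 * x₁ + V⁻¹ 0 1 * s + v⁻¹ * w) / (V⁻¹ 0 0 + v⁻¹)) ^ 2) / 2) := by
  set B := V⁻¹
  set c := B 0 0 + v⁻¹ with hc_def
  set m := (B 0 0 * x₁ + B 0 1 * s + v⁻¹ * w) / c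
  have hm : c * m = B 0 0 * x₁ + B 0 1 * s + v⁻¹ * w := mul_div_cancel₀ _ hc
  have hB : B 1 0 = B 0 1 := hV.inv.apply 0 1
  set R := B 0 0 * (x₁ - m) ^ 2 + 2 * B 0 1 * (x₁ - m) * s + B 1 1 * s ^ 2 + (m - w) ^ 2 / v
  refine ⟨(2 * π)⁻¹ * (√V.det)⁻¹ * (√(2 * π * v))⁻¹ * exp (-R / 2), fun y => ?_⟩
  have hsquare : -(B 0 0 * (x₁ - y) ^ 2 + (B 0 1 + B 1 0) * (x₁ - y) * s + B 1 1 * s ^ 2) / 2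
      + -(y - w) ^ 2 / (2 * v) = -R / 2 + -(c * (y - m) ^ 2) / 2 := by
    rw [hB]
    linear_combination (y - m) * (y + m) / 2 * hc_def - (y - m) * hm
  rw [gaussianDensity2, gaussianDensity1, vec2_dotProduct_mulVec]
  calc _ = (2 * π)⁻¹ * (√V.det)⁻¹ * (√(2 * π * v))⁻¹ *
        exp (-(B 0 0 * (x₁ - y) ^ 2 + (B 0 1 + B 1 0) * (x₁ - y) * s + B 1 1 * s ^ 2) / 2
          + -(y - w) ^ 2 / (2 * v)) := by rw [exp_add]; ring
    _ = _ := by rw [hsquare, exp_add]; ring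

theorem gaussian_quadratic_form_integral_general
    (A V₁ : Matrix (Fin 2) (Fin 2) ℝ) (hV₁ : V₁.PosDef)
    (α β v₂ : ℝ) (hv₂ : 0 < v₂) (x₁ x₂ y₂ w : ℝ) :
    (∫ y₁ : ℝ,
        (![x₁ - y₁ + α, x₂ - y₂ + β] ⬝ᵥ A.mulVec ![x₁ - y₁ + α, x₂ - y₂ + β]) *
          (gaussianDensity2 V₁ ![x₁ - y₁, x₂ - y₂] * gaussianDensity1 v₂ (y₁ - w)))
      = ((![(v₂⁻¹ * (x₁ - w) - V₁⁻¹ 0 1 * (x₂ - y₂)) / (V₁⁻¹ 0 0 + v₂⁻¹) + α, x₂ - y₂ + β]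
            ⬝ᵥ A.mulVec
              ![(v₂⁻¹ * (x₁ - w) - V₁⁻¹ 0 1 * (x₂ - y₂)) / (V₁⁻¹ 0 0 + v₂⁻¹) + α,
                x₂ - y₂ + β]) +
          A 0 0 / (V₁⁻¹ 0 0 + v₂⁻¹)) *
        ∫ y₁ : ℝ, gaussianDensity2 V₁ ![x₁ - y₁, x₂ - y₂] * gaussianDensity1 v₂ (y₁ - w) := by
  have hc : 0 < V₁⁻¹ 0 0 + v₂⁻¹ := add_pos hV₁.inv.diag_pos (inv_pos.2 hv₂)
  obtain ⟨K, hK⟩ := exists_gaussianDensity2_mul_gaussianDensity1_eq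
    (isHermitian_iff_isSymm.1 hV₁.isHermitian) hc.ne' x₁ (x₂ - y₂) w
  set c := V₁⁻¹ 0 0 + v₂⁻¹ with hc_def
  set m := (V₁⁻¹ 0 0 * x₁ + V₁⁻¹ 0 1 * (x₂ - y₂) + v₂⁻¹ * w) / c
  set W := (v₂⁻¹ * (x₁ - w) - V₁⁻¹ 0 1 * (x₂ - y₂)) / c + α
  have hm : c * m = V₁⁻¹ 0 0 * x₁ + V₁⁻¹ 0 1 * (x₂ - y₂) + v₂⁻¹ * w := mul_div_cancel₀ _ hc.ne'
  have hW : W = x₁ - m + α := by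
    rw [add_left_inj, div_eq_iff hc.ne']
    linear_combination hm - x₁ * hc_def
  have hquad : ∀ y₁ : ℝ,
      ![x₁ - y₁ + α, x₂ - y₂ + β] ⬝ᵥ A *ᵥ ![x₁ - y₁ + α, x₂ - y₂ + β]
        = A 0 0 * (y₁ - m) ^ 2 + -(2 * A 0 0 * W + (A 0 1 + A 1 0) * (x₂ - y₂ + β)) * (y₁ - m)
          + ![W, x₂ - y₂ + β] ⬝ᵥ A *ᵥ ![W, x₂ - y₂ + β] := fun y₁ => by
    rw [show x₁ - y₁ + α = W - (y₁ - m) by rw [hW]; ring, vec2_dotProduct_mulVec_sub_fst]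
    ring
  simp_rw [hK, hquad]
  exact integral_quadratic_mul_exp_neg_mul_sq hc K m _ _ _

/-- Lemma A.2 (Ogihara, LAMN for nonsynchronously observed diffusions):
an explicit Gaussian integral identity for a quadratic form integrated against
the product of a bivariate and a univariate Gaussian density. -/
theorem gaussian_quadratic_form_integral
    (A V₁ : Matrix (Fin 2) (Fin 2) ℝ) (hA : A.IsSymm) (hV₁ : V₁.PosDef)
    (α β v₂ : ℝ) (hv₂ : 0 < v₂) (x₁ x₂ y₂ w : ℝ) :
    (∫ y₁ : ℝ,
        (![x₁ - y₁ + α, x₂ - y₂ + β] ⬝ᵥ A.mulVec ![x₁ - y₁ + α, x₂ - y₂ + β]) *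
          (gaussianDensity2 V₁ ![x₁ - y₁, x₂ - y₂] * gaussianDensity1 v₂ (y₁ - w)))
      = ((![(v₂⁻¹ * (x₁ - w) - V₁⁻¹ 0 1 * (x₂ - y₂)) / (V₁⁻¹ 0 0 + v₂⁻¹) + α, x₂ - y₂ + β]
            ⬝ᵥ A.mulVec
              ![(v₂⁻¹ * (x₁ - w) - V₁⁻¹ 0 1 * (x₂ - y₂)) / (V₁⁻¹ 0 0 + v₂⁻¹) + α,
                x₂ - y₂ + β]) +
          A 0 0 / (V₁⁻¹ 0 0 + v₂⁻¹)) *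
        ∫ y₁ : ℝ, gaussianDensity2 V₁ ![x₁ - y₁, x₂ - y₂] * gaussianDensity1 v₂ (y₁ - w) :=
  gaussian_quadratic_form_integral_general A V₁ hV₁ α β v₂ hv₂ x₁ x₂ y₂ w
end

section
/- Fix T > 0 and a sequence (b_n)_{n∈ℕ} of real numbers with b_n ≥ 1 for all n and b_n → ∞. For each n, on a probability space (Ω, F, P), let ℓ_n be a random positive integer and let S^{n,0}, S^{n,1}, S^{n,2}, … be random variables with S^{n,0} = 0, S^{n,ℓ_n} = T, and S^{n,i-1} < S^{n,i} for all 1 ≤ i ≤ ℓ_n. Define the counting process N^n_t = ∑_{i=1}^{ℓ_n} 1_{{S^{n,i} ≤ t}} for t ∈ [0,T]. Let q > 0 and assume there exists n₀ ∈ ℕ such that sup_{n ≥ n₀} sup_{0 ≤ t ≤ T − b_n^{-1}} E[ ( N^n_{t + b_n^{-1}} − N^n_t )^q ] < ∞. Then for any δ₂ > 3/q and δ₃ > 3/q: lim_{n→∞} b_n² · sup_{j₁, j₂ ∈ ℕ, |j₁ − j₂| ≥ b_n^{δ₂}} P[ ℓ_n ≥ max(j₁, j₂) and |S^{n,j₂}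 − S^{n,j₁}| / |j₂ − j₁| ≤ b_n^{−1−δ₃} ] = 0. -/
/-!
Put `β = bₙ` and `δ = min δ₂ δ₃`. If `j - i ≥ β ^ δ₂` and the observation times
`S^{i+1}, …, S^j` lie in an interval of length at most `(j - i) β ^ (-1 - δ₃)`, then by the
pigeonhole principle one of the `⌈T β⌉` windows of length `β⁻¹` partitioning `(0, T]` contains
at least `β ^ δ / 3` of them. So the event is covered by `⌈T β⌉` events
`{N_{t + β⁻¹} - N_t ≥ β ^ δ / 3}`, each of probability `O(β ^ (-δ q))` by Markov's inequality
applied to the `q`-th moment. Hence `β²` times the supremum is `O(β ^ (3 - δ q)) → 0`.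
-/

open MeasureTheory Filter Set ENNReal
open scoped Finset

lemma sum_ite_le_sub_sum_ite_le {ι : Type*} (s : Finset ι) (x : ι → ℝ) {t u : ℝ} (htu : t ≤ u) :
    ∑ i ∈ s, (if x i ≤ u then (1 : ℝ) else 0) - ∑ i ∈ s, (if x i ≤ t then (1 : ℝ) else 0) =
      #{i ∈ s | x i ∈ Ioc t u} := by
  rw [Finset.natCast_card_filter, ← Finset.sum_sub_distrib]
  refine Finset.sum_congr rfl fun i _ => ?_
  by_cases ht : x i ≤ t
  · simp [ht, ht.trans htu, not_lt.2 ht]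
  · simp [ht, lt_of_not_ge ht]

lemma measurable_sum_of_measurable_index {Ω ι M : Type*} [MeasurableSpace Ω] [AddCommMonoid M]
    [MeasurableSpace M] [MeasurableAdd₂ M] {ℓ : Ω → ℕ} (hℓ : Measurable ℓ) (s : ℕ → Finset ι)
    {f : ι → Ω → M} (hf : ∀ i, Measurable (f i)) :
    Measurable fun ω => ∑ i ∈ s (ℓ ω), f i ω :=
  (measurable_from_prod_countable_left (f := fun p : Ω × ℕ => ∑ i ∈ s p.2, f i p.1)
    fun k => Finset.measurable_sum (s k) fun i _ => hf i).comp (measurable_id.prodMk hℓ)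

lemma meas_ge_le_lintegral_rpow_mul_inv {Ω : Type*} [MeasurableSpace Ω] {μ : Measure Ω}
    {X : Ω → ℝ} (hX : AEMeasurable X μ) {q r : ℝ} (hq : 0 < q) (hr : 0 < r) :
    μ {ω | r ≤ X ω} ≤ (∫⁻ ω, ENNReal.ofReal (X ω ^ q) ∂μ) * ENNReal.ofReal ((r ^ q)⁻¹) := by
  have hrq : 0 < r ^ q := Real.rpow_pos_of_pos hr q
  calc μ {ω | r ≤ X ω} ≤ μ {ω | ENNReal.ofReal (r ^ q) ≤ ENNReal.ofReal (X ω ^ q)} :=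
        measure_mono fun ω h => ENNReal.ofReal_le_ofReal (Real.rpow_le_rpow hr.le h hq.le)
    _ ≤ (∫⁻ ω, ENNReal.ofReal (X ω ^ q) ∂μ) / ENNReal.ofReal (r ^ q) :=
        meas_ge_le_lintegral_div (hX.pow_const q).ennreal_ofReal
          (ENNReal.ofReal_pos.2 hrq).ne' ENNReal.ofReal_ne_top
    _ = _ := by rw [div_eq_mul_inv, ENNReal.ofReal_inv_of_pos hrq]

lemma tendsto_mul_ofReal_rpow_nhds_zero {α : Type*} {l : Filter α} {b : α → ℝ}
    (hb : Tendsto b l atTop) {p : ℝ} (hp : p < 0) {M : ℝ≥0∞} (hM : M ≠ ⊤) (C : ℝ) :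
    Tendsto (fun a => M * ENNReal.ofReal (C * b a ^ p)) l (nhds 0) := by
  have h : Tendsto (fun a => C * b a ^ p) l (nhds 0) := by
    simpa using ((tendsto_rpow_neg_atTop (neg_pos.2 hp)).comp hb).const_mul C
  simpa using ENNReal.Tendsto.const_mul (ENNReal.tendsto_ofReal h) (Or.inr hM)

lemma exists_le_card_filter_ceil_mul_eq {ι : Type*} (s : Finset ι) (x : ι → ℝ) {a L β r : ℝ}
    (ha : 0 ≤ a) (hL : 0 ≤ L) (hβ : 0 ≤ β) (hr : 0 ≤ r)
    (hx : ∀ i ∈ s, x i ∈ Icc a (a + L)) (hs : r * (L * β + 2) ≤ #s) :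
    ∃ k, r ≤ #{i ∈ s | ⌈x i * β⌉₊ = k} := by
  have hle : ⌈a * β⌉₊ ≤ ⌈(a + L) * β⌉₊ := Nat.ceil_mono (by nlinarith)
  have hmaps : ∀ i ∈ s, ⌈x i * β⌉₊ ∈ Finset.Icc ⌈a * β⌉₊ ⌈(a + L) * β⌉₊ := fun i hi =>
    Finset.mem_Icc.2 ⟨Nat.ceil_mono (by gcongr; exact (hx i hi).1),
      Nat.ceil_mono (by gcongr; exact (hx i hi).2)⟩
  have hcard : (#(Finset.Icc ⌈a * β⌉₊ ⌈(a + L) * β⌉₊) : ℝ) ≤ L * β + 2 := by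
    have h1 := Nat.ceil_lt_add_one (by positivity : 0 ≤ (a + L) * β)
    have h2 := Nat.le_ceil (a * β)
    rw [Nat.card_Icc, Nat.cast_sub (by omega)]
    push_cast
    nlinarith
  obtain ⟨k, -, hk⟩ :=
    Finset.exists_le_card_fiber_of_nsmul_le_card_of_maps_to (b := r) hmaps
      (Finset.nonempty_Icc.2 hle) (by rw [nsmul_eq_mul]; nlinarith)
  exact ⟨k, hk⟩

/-- Left end of the window `((k - 1) / β, k / β]`, moved to `T - β⁻¹` when that window leaves
`[0, T]`, so that it stays an admissible time for the moment bound. -/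
noncomputable def gridPoint (T β : ℝ) (k : ℕ) : ℝ := min (((k : ℝ) - 1) / β) (T - β⁻¹)

lemma mem_Ioc_gridPoint_ceil {T β x : ℝ} (hβ : 0 < β) (hx : x ∈ Icc 0 T) :
    x ∈ Ioc (gridPoint T β ⌈x * β⌉₊) (gridPoint T β ⌈x * β⌉₊ + β⁻¹) := by
  set k := ⌈x * β⌉₊
  have hlt : ((k : ℝ) - 1) / β < x := by
    rw [div_lt_iff₀ hβ]; linarith [Nat.ceil_lt_add_one (mul_nonneg hx.1 hβ.le)]
  have hle : x ≤ ((k : ℝ) - 1) / β + β⁻¹ := by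
    rw [show ((k : ℝ) - 1) / β + β⁻¹ = k / β by field_simp; ring, le_div_iff₀ hβ]
    exact Nat.le_ceil _
  unfold gridPoint
  rcases le_total (((k : ℝ) - 1) / β) (T - β⁻¹) with h | h
  · rw [min_eq_left h]; exact ⟨hlt, hle⟩
  · rw [min_eq_right h]; exact ⟨h.trans_lt hlt, by linarith [hx.2]⟩

lemma gridPoint_mem_Icc {T β : ℝ} {k : ℕ} (hβ : 0 < β) (hTβ : β⁻¹ ≤ T) (hk : 1 ≤ k) :
    gridPoint T β k ∈ Icc 0 (T - β⁻¹) :=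
  ⟨le_min (div_nonneg (by simpa using hk) hβ.le) (by linarith), min_le_right _ _⟩

noncomputable def countIoc (ℓ : ℕ) (x : ℕ → ℝ) (t u : ℝ) : ℕ :=
  #{i ∈ Finset.Icc 1 ℓ | x i ∈ Ioc t u}

lemma rpow_min_div_three_mul_le {β D L δ₂ δ₃ : ℝ} (hβ : 1 ≤ β) (hD : β ^ δ₂ ≤ D)
    (hL : L ≤ D * β ^ (-1 - δ₃)) : β ^ min δ₂ δ₃ / 3 * (L * β + 2) ≤ D := by
  have hβpos : 0 < β := zero_lt_one.trans_le hβ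
  have hLβ : L * β ≤ D * β ^ (-δ₃) := by
    calc L * β ≤ D * β ^ (-1 - δ₃) * β := by gcongr
      _ = D * β ^ (-δ₃) := by
        rw [mul_assoc, ← Real.rpow_add_one hβpos.ne']; ring_nf
  have h₂ : β ^ min δ₂ δ₃ ≤ D := (Real.rpow_le_rpow_of_exponent_le hβ (min_le_left _ _)).trans hD
  have h₃ : β ^ min δ₂ δ₃ * β ^ (-δ₃) ≤ 1 := by
    rw [← Real.rpow_add hβpos]
    exact Real.rpow_le_one_of_one_le_of_nonpos hβ (by linarith [min_le_right δ₂ δ₃])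
  have hD0 : 0 ≤ D := (Real.rpow_nonneg hβpos.le _).trans hD
  nlinarith [Real.rpow_nonneg hβpos.le (min δ₂ δ₃), Real.rpow_nonneg hβpos.le (-δ₃)]

lemma exists_le_countIoc_gridPoint {T β δ₂ δ₃ : ℝ} (hβ : 1 ≤ β) {ℓ : ℕ} {x : ℕ → ℝ}
    (h0 : x 0 = 0) (hT : x ℓ = T) (hx : ∀ i, 1 ≤ i → i ≤ ℓ → x (i - 1) < x i) {i j : ℕ}
    (hj : j ≤ ℓ) (hsep : β ^ δ₂ ≤ (j : ℝ) - i)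
    (hslope : x j - x i ≤ ((j : ℝ) - i) * β ^ (-1 - δ₃)) :
    ∃ k ∈ Finset.Icc 1 ⌈T * β⌉₊,
      β ^ min δ₂ δ₃ / 3 ≤ countIoc ℓ x (gridPoint T β k) (gridPoint T β k + β⁻¹) := by
  have hβpos : 0 < β := zero_lt_one.trans_le hβ
  have hmono : StrictMonoOn x (Iic ℓ) :=
    strictMonoOn_Iic_of_lt_succ fun m hm => by simpa using hx (m + 1) (by omega) hm
  have hij : i < j := by
    exact_mod_cast sub_pos.1 ((Real.rpow_pos_of_pos hβpos δ₂).trans_le hsep)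
  have hmem : ∀ i' ≤ ℓ, x i' ∈ Icc 0 T := fun i' hi' =>
    ⟨h0 ▸ hmono.monotoneOn (by simp) (by simpa using hi') (Nat.zero_le _),
      hT ▸ hmono.monotoneOn (by simpa using hi') (by simp) hi'⟩
  set s := Finset.Icc (i + 1) j
  have hs : (#s : ℝ) = j - i := by
    rw [Nat.card_Icc, Nat.cast_sub (by omega)]; push_cast; ring
  have hs_mem : ∀ i' ∈ s, x i' ∈ Icc (x i) (x i + (x j - x i)) := fun i' hi' => by
    rw [Finset.mem_Icc] at hi'
    rw [add_sub_cancel]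
    exact ⟨hmono.monotoneOn (by simp; omega) (by simp; omega) (by omega),
      hmono.monotoneOn (by simp; omega) (by simpa using hj) hi'.2⟩
  obtain ⟨k, hk⟩ := exists_le_card_filter_ceil_mul_eq s x (hmem i (by omega)).1
    (sub_nonneg.2 (hmono.monotoneOn (by simp; omega) (by simpa using hj) hij.le)) hβpos.le
    (by positivity) hs_mem (hs ▸ rpow_min_div_three_mul_le hβ hsep hslope)
  obtain ⟨i₀, hi₀⟩ : ({i' ∈ s | ⌈x i' * β⌉₊ = k}).Nonempty := by
    rw [← Finset.card_pos]
    exact_mod_cast (by positivity : (0 : ℝ) < β ^ min δ₂ δ₃ / 3).trans_le hk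
  obtain ⟨hi₀s, rfl⟩ := Finset.mem_filter.1 hi₀
  have hi₀s' := Finset.mem_Icc.1 hi₀s
  refine ⟨⌈x i₀ * β⌉₊, Finset.mem_Icc.2 ⟨Nat.ceil_pos.2 (mul_pos ?_ hβpos), Nat.ceil_mono ?_⟩,
    hk.trans (Nat.cast_le.2 (Finset.card_le_card fun i' hi' => ?_))⟩
  · exact h0 ▸ hmono (by simp) (by simp; omega) (by omega)
  · exact mul_le_mul_of_nonneg_right (hmem i₀ (by omega)).2 hβpos.le
  · obtain ⟨hi's, hk'⟩ := Finset.mem_filter.1 hi'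
    have := Finset.mem_Icc.1 hi's
    exact Finset.mem_filter.2 ⟨Finset.mem_Icc.2 ⟨by omega, by omega⟩,
      hk' ▸ mem_Ioc_gridPoint_ceil hβpos (hmem i' (by omega))⟩

lemma exists_le_countIoc_gridPoint_of_abs {T β δ₂ δ₃ : ℝ} (hβ : 1 ≤ β) {ℓ : ℕ} {x : ℕ → ℝ}
    (h0 : x 0 = 0) (hT : x ℓ = T) (hx : ∀ i, 1 ≤ i → i ≤ ℓ → x (i - 1) < x i) {j₁ j₂ : ℕ}
    (hj : max j₁ j₂ ≤ ℓ) (hsep : β ^ δ₂ ≤ |(j₁ : ℝ) - j₂|)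
    (hslope : |x j₂ - x j₁| / |(j₂ : ℝ) - j₁| ≤ β ^ (-1 - δ₃)) :
    ∃ k ∈ Finset.Icc 1 ⌈T * β⌉₊,
      β ^ min δ₂ δ₃ / 3 ≤ countIoc ℓ x (gridPoint T β k) (gridPoint T β k + β⁻¹) := by
  wlog h : j₁ ≤ j₂ generalizing j₁ j₂
  · exact this (max_comm j₁ j₂ ▸ hj) (abs_sub_comm (j₁ : ℝ) j₂ ▸ hsep)
      (by rwa [abs_sub_comm, abs_sub_comm (j₁ : ℝ)]) (le_of_not_ge h)
  have habs : |(j₂ : ℝ) - j₁| = j₂ - j₁ := abs_of_nonneg (sub_nonneg.2 (Nat.cast_le.2 h))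
  rw [abs_sub_comm, habs] at hsep
  rw [habs, div_le_iff₀ ((Real.rpow_pos_of_pos (zero_lt_one.trans_le hβ) δ₂).trans_le hsep)]
    at hslope
  exact exists_le_countIoc_gridPoint hβ h0 hT hx (le_of_max_le_right hj) hsep
    (by linarith [le_abs_self (x j₂ - x j₁)])

lemma ofReal_sq_mul_ceil_mul_le {T β δ q : ℝ} (M : ℝ≥0∞) (hβ : 1 ≤ β) (hT : 0 ≤ T) :
    ENNReal.ofReal (β ^ 2) * (⌈T * β⌉₊ * (M * ENNReal.ofReal (((β ^ δ / 3) ^ q)⁻¹))) ≤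
      M * ENNReal.ofReal ((T + 1) * 3 ^ q * β ^ (3 - δ * q)) := by
  have hβpos : 0 < β := zero_lt_one.trans_le hβ
  have hK : (⌈T * β⌉₊ : ℝ) ≤ (T + 1) * β :=
    (Nat.ceil_lt_add_one (by positivity)).le.trans (by nlinarith)
  have hid : β ^ 2 * ((T + 1) * β) * ((β ^ δ / 3) ^ q)⁻¹ = (T + 1) * 3 ^ q * β ^ (3 - δ * q) := by
    rw [Real.div_rpow (by positivity) (by norm_num), ← Real.rpow_mul hβpos.le,
      Real.rpow_sub hβpos, show (3 : ℝ) = (3 : ℕ) by norm_num, Real.rpow_natCast]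
    field_simp
  calc ENNReal.ofReal (β ^ 2) * (⌈T * β⌉₊ * (M * ENNReal.ofReal (((β ^ δ / 3) ^ q)⁻¹)))
      = M * ENNReal.ofReal (β ^ 2 * ⌈T * β⌉₊ * ((β ^ δ / 3) ^ q)⁻¹) := by
        rw [ENNReal.ofReal_mul (by positivity), ENNReal.ofReal_mul (by positivity),
          ENNReal.ofReal_natCast]
        ring
    _ ≤ M * ENNReal.ofReal (β ^ 2 * ((T + 1) * β) * ((β ^ δ / 3) ^ q)⁻¹) := by gcongr
    _ = M * ENNReal.ofReal ((T + 1) * 3 ^ q * β ^ (3 - δ * q)) := by rw [hid]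

lemma measure_small_slope_le {Ω : Type*} [MeasurableSpace Ω] {P : Measure Ω} {ℓ : Ω → ℕ}
    {S : ℕ → Ω → ℝ} {N : ℝ → Ω → ℝ} {T β q δ₂ δ₃ : ℝ} {M : ℝ≥0∞} (hβ : 1 ≤ β) (hTβ : β⁻¹ ≤ T)
    (hq : 0 < q) (hℓ : Measurable ℓ)
    (hS : ∀ i, Measurable (S i)) (h0 : ∀ ω, S 0 ω = 0) (hT : ∀ ω, S (ℓ ω) ω = T)
    (hmono : ∀ ω i, 1 ≤ i → i ≤ ℓ ω → S (i - 1) ω < S i ω)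
    (hN : ∀ t ω, N t ω = ∑ i ∈ Finset.Icc 1 (ℓ ω), if S i ω ≤ t then (1 : ℝ) else 0)
    (hmom : ∀ t ∈ Icc 0 (T - β⁻¹), ∫⁻ ω, ENNReal.ofReal ((N (t + β⁻¹) ω - N t ω) ^ q) ∂P ≤ M)
    {j₁ j₂ : ℕ} (hsep : β ^ δ₂ ≤ |(j₁ : ℝ) - j₂|) :
    P {ω | max j₁ j₂ ≤ ℓ ω ∧ |S j₂ ω - S j₁ ω| / |(j₂ : ℝ) - j₁| ≤ β ^ (-1 - δ₃)} ≤
      ⌈T * β⌉₊ * (M * ENNReal.ofReal (((β ^ min δ₂ δ₃ / 3) ^ q)⁻¹)) := by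
  set r := β ^ min δ₂ δ₃ / 3
  have hβpos : 0 < β := zero_lt_one.trans_le hβ
  have hincr : ∀ t ω, N (t + β⁻¹) ω - N t ω = countIoc (ℓ ω) (S · ω) t (t + β⁻¹) :=
      fun t ω => by
    rw [hN, hN]
    exact sum_ite_le_sub_sum_ite_le _ _ (le_add_of_nonneg_right (inv_nonneg.2 hβpos.le))
  have hNmeas : ∀ t, Measurable (N t) := fun t => by
    simp_rw [funext (hN t)]
    exact measurable_sum_of_measurable_index hℓ _ fun i =>
      Measurable.ite (measurableSet_le (hS i) measurable_const) measurable_const measurable_const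
  have hcover : {ω | max j₁ j₂ ≤ ℓ ω ∧ |S j₂ ω - S j₁ ω| / |(j₂ : ℝ) - j₁| ≤ β ^ (-1 - δ₃)} ⊆
      ⋃ k ∈ Finset.Icc 1 ⌈T * β⌉₊,
        {ω | r ≤ N (gridPoint T β k + β⁻¹) ω - N (gridPoint T β k) ω} := by
    rintro ω ⟨hj, hslope⟩
    obtain ⟨k, hk, hcount⟩ :=
      exists_le_countIoc_gridPoint_of_abs (x := (S · ω)) hβ (h0 ω) (hT ω) (hmono ω) hj hsep hslope
    exact mem_biUnion hk (show r ≤ _ by rw [hincr]; exact hcount)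
  calc _ ≤ _ := measure_mono hcover
    _ ≤ ∑ k ∈ Finset.Icc 1 ⌈T * β⌉₊,
          P {ω | r ≤ N (gridPoint T β k + β⁻¹) ω - N (gridPoint T β k) ω} :=
        measure_biUnion_finset_le _ _
    _ ≤ ∑ _k ∈ Finset.Icc 1 ⌈T * β⌉₊, M * ENNReal.ofReal ((r ^ q)⁻¹) :=
        Finset.sum_le_sum fun k hk =>
          (meas_ge_le_lintegral_rpow_mul_inv ((hNmeas _).sub (hNmeas _)).aemeasurable hq
            (by positivity)).trans
          (mul_le_mul_left (hmom _ (gridPoint_mem_Icc hβpos hTβ (Finset.mem_Icc.1 hk).1)) _)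
    _ = _ := by rw [Finset.sum_const, Nat.card_Icc, nsmul_eq_mul, Nat.add_sub_cancel]

theorem observation_times_spread_condition_general
    {Ω : Type*} [MeasurableSpace Ω] (P : Measure Ω) [IsProbabilityMeasure P]
    (T : ℝ) (hT : 0 < T) (b : ℕ → ℝ) (hb_one : ∀ n, 1 ≤ b n)
    (hb_tendsto : Tendsto b atTop atTop)
    (ℓ : ℕ → Ω → ℕ) (S : ℕ → ℕ → Ω → ℝ)
    (hℓ_meas : ∀ n, Measurable (ℓ n)) (hS_meas : ∀ n i, Measurable (S n i))
    (hS_zero : ∀ n ω, S n 0 ω = 0) (hS_top : ∀ n ω, S n (ℓ n ω) ω = T)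
    (hS_mono : ∀ n ω i, 1 ≤ i → i ≤ ℓ n ω → S n (i - 1) ω < S n i ω)
    (N : ℕ → ℝ → Ω → ℝ)
    (hN : ∀ n t ω, N n t ω = ∑ i ∈ Finset.Icc 1 (ℓ n ω), if S n i ω ≤ t then (1 : ℝ) else 0)
    (q : ℝ) (hq : 0 < q)
    (hmom : ∃ n₀ : ℕ,
      (⨆ (n : ℕ) (_ : n₀ ≤ n) (t : ℝ) (_ : t ∈ Set.Icc (0 : ℝ) (T - (b n)⁻¹)),
        ∫⁻ ω, ENNReal.ofReal ((N n (t + (b n)⁻¹) ω - N n t ω) ^ q) ∂P) < ⊤) :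
    ∀ δ₂ δ₃ : ℝ, 3 / q < δ₂ → 3 / q < δ₃ →
      Tendsto
        (fun n =>
          ENNReal.ofReal (b n ^ 2) *
            ⨆ (j₁ : ℕ) (j₂ : ℕ) (_ : b n ^ δ₂ ≤ |(j₁ : ℝ) - (j₂ : ℝ)|),
              P {ω | max j₁ j₂ ≤ ℓ n ω ∧
                  |S n j₂ ω - S n j₁ ω| / |(j₂ : ℝ) - (j₁ : ℝ)| ≤ b n ^ (-1 - δ₃)})
        atTop (nhds 0) := by
  intro δ₂ δ₃ hδ₂ hδ₃
  obtain ⟨n₀, hM⟩ := hmom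
  have hδq : 3 < min δ₂ δ₃ * q := (div_lt_iff₀ hq).1 (lt_min hδ₂ hδ₃)
  refine tendsto_of_tendsto_of_tendsto_of_le_of_le' tendsto_const_nhds
    (tendsto_mul_ofReal_rpow_nhds_zero hb_tendsto (by linarith : 3 - min δ₂ δ₃ * q < 0) hM.ne
      ((T + 1) * 3 ^ q))
    (Eventually.of_forall fun n => zero_le) ?_
  filter_upwards [eventually_ge_atTop n₀, hb_tendsto.eventually_ge_atTop T⁻¹] with n hn hbn
  refine (mul_le_mul_right (iSup₂_le fun j₁ j₂ => iSup_le fun hsep => ?_) _).trans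
    (ofReal_sq_mul_ceil_mul_le _ (hb_one n) hT.le)
  refine measure_small_slope_le (hb_one n) (inv_le_of_inv_le₀ hT hbn) hq (hℓ_meas n) (hS_meas n)
    (hS_zero n) (hS_top n) (hS_mono n) (hN n) (fun t ht => ?_) hsep
  exact le_iSup₂_of_le n hn (le_iSup₂_of_le t ht le_rfl)

/-- Lemma 2.2 (Ogihara, LAMN for nonsynchronously observed diffusions), for one
family of observation times: if the `q`-th moments of the increments of the
counting process over intervals of length `bₙ⁻¹` are uniformly bounded, then
condition [A2].2 holds for any `δ₂, δ₃ > 3/q`. -/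
theorem observation_times_spread_condition
    {Ω : Type*} [MeasurableSpace Ω] (P : Measure Ω) [IsProbabilityMeasure P]
    (T : ℝ) (hT : 0 < T) (b : ℕ → ℝ) (hb_one : ∀ n, 1 ≤ b n)
    (hb_tendsto : Tendsto b atTop atTop)
    (ℓ : ℕ → Ω → ℕ) (S : ℕ → ℕ → Ω → ℝ)
    (hℓ_meas : ∀ n, Measurable (ℓ n)) (hS_meas : ∀ n i, Measurable (S n i))
    (hℓ_pos : ∀ n ω, 1 ≤ ℓ n ω)
    (hS_zero : ∀ n ω, S n 0 ω = 0) (hS_top : ∀ n ω, S n (ℓ n ω) ω = T)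
    (hS_mono : ∀ n ω i, 1 ≤ i → i ≤ ℓ n ω → S n (i - 1) ω < S n i ω)
    (N : ℕ → ℝ → Ω → ℝ)
    (hN : ∀ n t ω, N n t ω = ∑ i ∈ Finset.Icc 1 (ℓ n ω), if S n i ω ≤ t then (1 : ℝ) else 0)
    (q : ℝ) (hq : 0 < q)
    (hmom : ∃ n₀ : ℕ,
      (⨆ (n : ℕ) (_ : n₀ ≤ n) (t : ℝ) (_ : t ∈ Set.Icc (0 : ℝ) (T - (b n)⁻¹)),
        ∫⁻ ω, ENNReal.ofReal ((N n (t + (b n)⁻¹) ω - N n t ω) ^ q) ∂P) < ⊤) :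
    ∀ δ₂ δ₃ : ℝ, 3 / q < δ₂ → 3 / q < δ₃ →
      Tendsto
        (fun n =>
          ENNReal.ofReal (b n ^ 2) *
            ⨆ (j₁ : ℕ) (j₂ : ℕ) (_ : b n ^ δ₂ ≤ |(j₁ : ℝ) - (j₂ : ℝ)|),
              P {ω | max j₁ j₂ ≤ ℓ n ω ∧
                  |S n j₂ ω - S n j₁ ω| / |(j₂ : ℝ) - (j₁ : ℝ)| ≤ b n ^ (-1 - δ₃)})
        atTop (nhds 0) :=
  observation_times_spread_condition_general P T hT b hb_one hb_tendsto ℓ S hℓ_meas hS_meas hS_zero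
    hS_top hS_mono N hN q hq hmom
end

section
/- Let d ∈ ℕ, α > 0, and let l : [0,∞) → [0,∞) be a continuous nondecreasing function with l(0) = 0 such that l(x) ≤ C₀(1 + x^p) for all x ≥ 0, for some constants C₀ > 0 and p > 0. For each n ∈ ℕ and each u ∈ ℝ^d with |u| ≤ α, let G_{n,u} be an ℝ^d-valued random vector on a probability space (Ω, F, P). Assume: (i) there exist q > p, K > 0 and n₀ ∈ ℕ such that sup_{n ≥ n₀} sup_{|u| ≤ α} E[ |G_{n,u}|^q ] ≤ K; and (ii) for every δ > 0 and ε > 0 there exists n₁ ∈ ℕ such that sup_{|u| ≤ α} P[ |G_{n,u} − G_{n,0}| > δ ] < ε for all n ≥ n₁. Then sup_{|u| ≤ α} | E[ l(|G_{n,u}|) ] − E[ l(|G_{n,0}|) ] | → 0 as n → ∞. -/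
open MeasureTheory Filter Set ENNReal Topology

/-! Truncate the loss at a level `M ≥ 1`. The truncated loss `x ↦ l (min x M)` takes values in
`[0, l M]` and is uniformly continuous, so its expectations at `X = |G_{n,u}|` and
`Y = |G_{n,0}|` differ by at most `η + l M · P(|X - Y| > δ)` when `l` varies by at most `η` on
`δ`-close points of `[0, M]`. The remainder `l x - l (min x M)` vanishes for `x ≤ M` and is at most
`2 C₀ M^(p-q) x^q` beyond, so the uniform `q`-th moment bound makes its expectation small once `M`
is large. Choose `M` first, then `δ` from the uniform continuity of `l` on `[0, M]`, then `n` so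
large that `P(|X - Y| > δ)` is small. -/

lemma rpow_le_one_add_rpow {x p q : ℝ} (hx : 0 ≤ x) (hp : 0 ≤ p) (hpq : p ≤ q) :
    x ^ p ≤ 1 + x ^ q := by
  rcases le_total x 1 with h | h
  · linarith [Real.rpow_le_one hx h hp, Real.rpow_nonneg hx q]
  · linarith [Real.rpow_le_rpow_of_exponent_le h hpq]

lemma rpow_le_rpow_sub_mul_rpow {x M p q : ℝ} (hM : 0 < M) (hMx : M ≤ x) (hpq : p ≤ q) :
    x ^ p ≤ M ^ (p - q) * x ^ q := by
  have hx : 0 < x := hM.trans_le hMx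
  calc x ^ p = x ^ (p - q) * x ^ q := by rw [← Real.rpow_add hx, sub_add_cancel]
    _ ≤ M ^ (p - q) * x ^ q :=
      mul_le_mul_of_nonneg_right (Real.rpow_le_rpow_of_nonpos hM hMx (sub_nonpos.2 hpq))
        (Real.rpow_nonneg hx.le q)

lemma exists_one_le_rpow_sub_mul_le {p q ε : ℝ} (hpq : p < q) (c : ℝ) (hε : 0 < ε) :
    ∃ M, 1 ≤ M ∧ M ^ (p - q) * c ≤ ε := by
  have h : Tendsto (fun M : ℝ => M ^ (p - q) * c) atTop (𝓝 0) := by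
    simpa using (tendsto_rpow_neg_atTop (sub_pos.2 hpq)).mul_const c
  exact ((eventually_ge_atTop 1).and (h.eventually (ge_mem_nhds hε))).exists

section Loss

variable {l : ℝ → ℝ} {C₀ p q M δ η x y : ℝ}

lemma abs_sub_comp_min_le_mul_rpow (hl_mono : MonotoneOn l (Ici 0))
    (hl_nonneg : ∀ x, 0 ≤ x → 0 ≤ l x) (hl_growth : ∀ x, 0 ≤ x → l x ≤ C₀ * (1 + x ^ p))
    (hC₀ : 0 ≤ C₀) (hp : 0 ≤ p) (hpq : p ≤ q) (hM : 1 ≤ M) (hx : 0 ≤ x) :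
    |l x - l (min x M)| ≤ 2 * C₀ * M ^ (p - q) * x ^ q := by
  have hM0 : 0 ≤ M := zero_le_one.trans hM
  rcases le_total x M with h | h
  · rw [min_eq_left h, sub_self, abs_zero]
    exact mul_nonneg (mul_nonneg (mul_nonneg zero_le_two hC₀) (Real.rpow_nonneg hM0 _))
      (Real.rpow_nonneg hx _)
  · rw [min_eq_right h, abs_of_nonneg (sub_nonneg.2 (hl_mono hM0 hx h))]
    calc l x - l M ≤ C₀ * (1 + x ^ p) := by linarith [hl_growth x hx, hl_nonneg M hM0]
      _ ≤ C₀ * (2 * x ^ p) := by gcongr; linarith [Real.one_le_rpow (hM.trans h) hp]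
      _ ≤ C₀ * (2 * (M ^ (p - q) * x ^ q)) := by
        gcongr; exact rpow_le_rpow_sub_mul_rpow (zero_lt_one.trans_le hM) h hpq
      _ = 2 * C₀ * M ^ (p - q) * x ^ q := by ring

lemma abs_comp_min_sub_comp_min_le_add_indicator (hl_mono : MonotoneOn l (Ici 0))
    (hl_nonneg : ∀ x, 0 ≤ x → 0 ≤ l x) (hM : 0 ≤ M) (hη : 0 ≤ η)
    (hδ : ∀ a ∈ Icc 0 M, ∀ b ∈ Icc 0 M, dist a b ≤ δ → dist (l a) (l b) ≤ η)
    (hx : 0 ≤ x) (hy : 0 ≤ y) :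
    |l (min x M) - l (min y M)| ≤ η + {t | δ < t}.indicator (fun _ => l M) |x - y| := by
  have hmem : ∀ {z}, 0 ≤ z → min z M ∈ Icc 0 M := fun hz => ⟨le_min hz hM, min_le_right _ _⟩
  by_cases hxy : δ < |x - y|
  · have hbound : ∀ {z}, 0 ≤ z → l (min z M) ∈ Icc 0 (l M) := fun hz =>
      ⟨hl_nonneg _ (hmem hz).1, hl_mono (hmem hz).1 hM (hmem hz).2⟩
    rw [indicator_of_mem (show |x - y| ∈ {t | δ < t} from hxy)]
    linarith [abs_sub_le_of_nonneg_of_le (hbound hx).1 (hbound hx).2 (hbound hy).1 (hbound hy).2]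
  · rw [indicator_of_notMem (show |x - y| ∉ {t | δ < t} from hxy), add_zero]
    refine hδ _ (hmem hx) _ (hmem hy) ?_
    calc dist (min x M) (min y M) ≤ max |x - y| |M - M| := abs_min_sub_min_le_max x M y M
      _ ≤ δ := by simpa using not_lt.1 hxy

lemma abs_sub_le_add_indicator_add_rpow (hl_mono : MonotoneOn l (Ici 0))
    (hl_nonneg : ∀ x, 0 ≤ x → 0 ≤ l x) (hl_growth : ∀ x, 0 ≤ x → l x ≤ C₀ * (1 + x ^ p))
    (hC₀ : 0 ≤ C₀) (hp : 0 ≤ p) (hpq : p ≤ q) (hM : 1 ≤ M) (hη : 0 ≤ η)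
    (hδ : ∀ a ∈ Icc 0 M, ∀ b ∈ Icc 0 M, dist a b ≤ δ → dist (l a) (l b) ≤ η)
    (hx : 0 ≤ x) (hy : 0 ≤ y) :
    |l x - l y| ≤ η + {t | δ < t}.indicator (fun _ => l M) |x - y|
      + 2 * C₀ * M ^ (p - q) * (x ^ q + y ^ q) := by
  have hmid := abs_comp_min_sub_comp_min_le_add_indicator hl_mono hl_nonneg
    (zero_le_one.trans hM) hη hδ hx hy
  have htail_x := abs_sub_comp_min_le_mul_rpow hl_mono hl_nonneg hl_growth hC₀ hp hpq hM hx
  have htail_y := abs_sub_comp_min_le_mul_rpow hl_mono hl_nonneg hl_growth hC₀ hp hpq hM hy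
  rw [abs_le] at hmid htail_x htail_y ⊢
  constructor <;> linarith

end Loss

section Integral

variable {Ω : Type*} [MeasurableSpace Ω] {P : Measure Ω} {l : ℝ → ℝ} {X : Ω → ℝ}

lemma ContinuousOn.measurable_comp_of_nonneg (hl : ContinuousOn l (Ici 0)) (hX : Measurable X)
    (hX0 : ∀ ω, 0 ≤ X ω) : Measurable fun ω => l (X ω) := by
  have hl' : Continuous fun x => l (max x 0) :=
    hl.comp_continuous (continuous_id.max continuous_const) fun x => le_max_right x 0
  convert hl'.measurable.comp hX using 2 with ω
  simp [max_eq_left (hX0 ω)]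

lemma integrable_of_lintegral_ofReal_le {K : ℝ} (hX : Measurable X) (hX0 : ∀ ω, 0 ≤ X ω)
    (h : ∫⁻ ω, ENNReal.ofReal (X ω) ∂P ≤ ENNReal.ofReal K) : Integrable X P :=
  ⟨hX.aestronglyMeasurable, (hasFiniteIntegral_iff_ofReal (Eventually.of_forall hX0)).2
    (h.trans_lt ofReal_lt_top)⟩

lemma integral_le_of_lintegral_ofReal_le {K : ℝ} (hK : 0 ≤ K) (hX : Measurable X)
    (hX0 : ∀ ω, 0 ≤ X ω) (h : ∫⁻ ω, ENNReal.ofReal (X ω) ∂P ≤ ENNReal.ofReal K) :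
    ∫ ω, X ω ∂P ≤ K := by
  rw [integral_eq_lintegral_of_nonneg_ae (Eventually.of_forall hX0) hX.aestronglyMeasurable]
  exact toReal_le_of_le_ofReal hK h

variable [IsProbabilityMeasure P] {C₀ p q : ℝ}

lemma integrable_comp_of_le_mul_one_add_rpow (hl_cont : ContinuousOn l (Ici 0))
    (hl_nonneg : ∀ x, 0 ≤ x → 0 ≤ l x) (hl_growth : ∀ x, 0 ≤ x → l x ≤ C₀ * (1 + x ^ p))
    (hC₀ : 0 ≤ C₀) (hp : 0 ≤ p) (hpq : p ≤ q) (hX : Measurable X) (hX0 : ∀ ω, 0 ≤ X ω)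
    (hXq : Integrable (fun ω => X ω ^ q) P) : Integrable (fun ω => l (X ω)) P := by
  refine Integrable.mono' (((integrable_const 2).add hXq).const_mul C₀)
    (hl_cont.measurable_comp_of_nonneg hX hX0).aestronglyMeasurable
    (Eventually.of_forall fun ω => ?_)
  rw [Real.norm_of_nonneg (hl_nonneg _ (hX0 ω))]
  calc l (X ω) ≤ C₀ * (1 + X ω ^ p) := hl_growth _ (hX0 ω)
    _ ≤ C₀ * (2 + X ω ^ q) :=
      mul_le_mul_of_nonneg_left (by linarith [rpow_le_one_add_rpow (hX0 ω) hp hpq]) hC₀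

theorem abs_integral_comp_sub_integral_comp_le {Y : Ω → ℝ} {M δ η : ℝ}
    (hl_cont : ContinuousOn l (Ici 0)) (hl_mono : MonotoneOn l (Ici 0))
    (hl_nonneg : ∀ x, 0 ≤ x → 0 ≤ l x) (hl_growth : ∀ x, 0 ≤ x → l x ≤ C₀ * (1 + x ^ p))
    (hC₀ : 0 ≤ C₀) (hp : 0 ≤ p) (hpq : p ≤ q) (hM : 1 ≤ M) (hη : 0 ≤ η)
    (hδ : ∀ a ∈ Icc 0 M, ∀ b ∈ Icc 0 M, dist a b ≤ δ → dist (l a) (l b) ≤ η)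
    (hX : Measurable X) (hY : Measurable Y) (hX0 : ∀ ω, 0 ≤ X ω) (hY0 : ∀ ω, 0 ≤ Y ω)
    (hXq : Integrable (fun ω => X ω ^ q) P) (hYq : Integrable (fun ω => Y ω ^ q) P) :
    |∫ ω, l (X ω) ∂P - ∫ ω, l (Y ω) ∂P| ≤ η + l M * P.real {ω | δ < |X ω - Y ω|}
      + 2 * C₀ * M ^ (p - q) * (∫ ω, X ω ^ q ∂P + ∫ ω, Y ω ^ q ∂P) := by
  have hS : MeasurableSet {ω | δ < |X ω - Y ω|} := measurableSet_lt measurable_const (hX.sub hY).abs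
  have hS_int : Integrable ({ω | δ < |X ω - Y ω|}.indicator fun _ => l M) P :=
    (integrable_const _).indicator hS
  have hmid_int : Integrable (fun ω => η + {ω | δ < |X ω - Y ω|}.indicator (fun _ => l M) ω) P :=
    (integrable_const η).add hS_int
  have htail_int : Integrable (fun ω => 2 * C₀ * M ^ (p - q) * (X ω ^ q + Y ω ^ q)) P :=
    (hXq.add hYq).const_mul _
  rw [← integral_sub
    (integrable_comp_of_le_mul_one_add_rpow hl_cont hl_nonneg hl_growth hC₀ hp hpq hX hX0 hXq)
    (integrable_comp_of_le_mul_one_add_rpow hl_cont hl_nonneg hl_growth hC₀ hp hpq hY hY0 hYq)]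
  calc |∫ ω, (l (X ω) - l (Y ω)) ∂P|
      ≤ ∫ ω, (η + {ω | δ < |X ω - Y ω|}.indicator (fun _ => l M) ω
          + 2 * C₀ * M ^ (p - q) * (X ω ^ q + Y ω ^ q)) ∂P := by
        rw [← Real.norm_eq_abs]
        exact norm_integral_le_of_norm_le (hmid_int.add htail_int)
          (Eventually.of_forall fun ω => abs_sub_le_add_indicator_add_rpow hl_mono hl_nonneg
            hl_growth hC₀ hp hpq hM hη hδ (hX0 ω) (hY0 ω))
    _ = _ := by
        rw [integral_add hmid_int htail_int,
          integral_add (integrable_const η) hS_int, integral_const, integral_indicator_const _ hS,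
          integral_const_mul, integral_add hXq hYq]
        simp [mul_comm]

end Integral

theorem uniform_risk_convergence_general
    {Ω : Type*} [MeasurableSpace Ω] (P : Measure Ω) [IsProbabilityMeasure P]
    (d : ℕ) (α : ℝ)
    (l : ℝ → ℝ) (hl_cont : ContinuousOn l (Set.Ici (0 : ℝ)))
    (hl_mono : MonotoneOn l (Set.Ici (0 : ℝ)))
    (hl_nonneg : ∀ x : ℝ, 0 ≤ x → 0 ≤ l x)
    (C₀ p : ℝ) (hC₀ : 0 < C₀) (hp : 0 < p)
    (hl_growth : ∀ x : ℝ, 0 ≤ x → l x ≤ C₀ * (1 + x ^ p))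
    (G : ℕ → EuclideanSpace ℝ (Fin d) → Ω → EuclideanSpace ℝ (Fin d))
    (hG_meas : ∀ n u, Measurable (G n u))
    (hmom : ∃ q : ℝ, p < q ∧ ∃ K : ℝ, 0 < K ∧ ∃ n₀ : ℕ, ∀ n, n₀ ≤ n →
      ∀ u : EuclideanSpace ℝ (Fin d), ‖u‖ ≤ α →
        ∫⁻ ω, ENNReal.ofReal (‖G n u ω‖ ^ q) ∂P ≤ ENNReal.ofReal K)
    (hunif : ∀ δ : ℝ, 0 < δ → ∀ ε : ℝ, 0 < ε → ∃ n₁ : ℕ, ∀ n, n₁ ≤ n →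
      ∀ u : EuclideanSpace ℝ (Fin d), ‖u‖ ≤ α →
        P {ω | δ < ‖G n u ω - G n 0 ω‖} < ENNReal.ofReal ε) :
    ∀ ε : ℝ, 0 < ε → ∃ N : ℕ, ∀ n, N ≤ n →
      ∀ u : EuclideanSpace ℝ (Fin d), ‖u‖ ≤ α →
        |(∫ ω, l ‖G n u ω‖ ∂P) - ∫ ω, l ‖G n 0 ω‖ ∂P| ≤ ε := by
  intro ε hε
  obtain ⟨q, hpq, K, hK, n₀, hmom⟩ := hmom
  obtain ⟨M, hM, hMK⟩ := exists_one_le_rpow_sub_mul_le hpq (4 * C₀ * K) (by positivity : 0 < ε / 3)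
  obtain ⟨δ, hδ, hδl⟩ := Metric.uniformContinuousOn_iff_le.1
    ((isCompact_Icc (a := 0) (b := M)).uniformContinuousOn_of_continuous
      (hl_cont.mono Icc_subset_Ici_self))
    (ε / 3) (by positivity)
  have hlM : 0 ≤ l M := hl_nonneg M (zero_le_one.trans hM)
  obtain ⟨n₁, hn₁⟩ := hunif δ hδ (ε / (3 * (l M + 1))) (by positivity)
  refine ⟨max n₀ n₁, fun n hn u hu => ?_⟩
  have hmoment : ∀ v : EuclideanSpace ℝ (Fin d), ‖v‖ ≤ α →
      Integrable (fun ω => ‖G n v ω‖ ^ q) P ∧ ∫ ω, ‖G n v ω‖ ^ q ∂P ≤ K := fun v hv => by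
    have hmeas := (hG_meas n v).norm.pow_const q
    have hbound := hmom n (le_of_max_le_left hn) v hv
    exact ⟨integrable_of_lintegral_ofReal_le hmeas (fun _ => by positivity) hbound,
      integral_le_of_lintegral_ofReal_le hK.le hmeas (fun _ => by positivity) hbound⟩
  have h0 : ‖(0 : EuclideanSpace ℝ (Fin d))‖ ≤ α := norm_zero.trans_le ((norm_nonneg u).trans hu)
  have hfar : P.real {ω | δ < |‖G n u ω‖ - ‖G n 0 ω‖|} ≤ ε / (3 * (l M + 1)) :=
    (measureReal_mono fun ω hω => hω.trans_le (abs_norm_sub_norm_le _ _)).trans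
      (toReal_le_of_le_ofReal (by positivity) (hn₁ n (le_of_max_le_right hn) u hu).le)
  calc _ ≤ ε / 3 + l M * P.real {ω | δ < |‖G n u ω‖ - ‖G n 0 ω‖|}
        + 2 * C₀ * M ^ (p - q) * (∫ ω, ‖G n u ω‖ ^ q ∂P + ∫ ω, ‖G n 0 ω‖ ^ q ∂P) :=
      abs_integral_comp_sub_integral_comp_le hl_cont hl_mono hl_nonneg hl_growth hC₀.le hp.le
        hpq.le hM (by positivity) hδl (hG_meas n u).norm (hG_meas n 0).norm (fun _ => norm_nonneg _)
        (fun _ => norm_nonneg _) (hmoment u hu).1 (hmoment 0 h0).1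
    _ ≤ ε / 3 + (l M + 1) * (ε / (3 * (l M + 1))) + 2 * C₀ * M ^ (p - q) * (K + K) := by
      gcongr
      · linarith
      · exact (hmoment u hu).2
      · exact (hmoment 0 h0).2
    _ ≤ ε := by
      have hfar_term : (l M + 1) * (ε / (3 * (l M + 1))) = ε / 3 := by field_simp
      have htail_term : 2 * C₀ * M ^ (p - q) * (K + K) = M ^ (p - q) * (4 * C₀ * K) := by ring
      linarith

/-- The uniform convergence of risk functions in the proof of Theorem 2.2
(Ogihara, LAMN for nonsynchronously observed diffusions): uniform convergence
in probability `G_{n,u} - G_{n,0} → 0` (uniformly over `|u| ≤ α`) together with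
a uniform moment bound yields uniform convergence of the expected losses, for
continuous nondecreasing loss functions of polynomial growth vanishing at `0`. -/
theorem uniform_risk_convergence
    {Ω : Type*} [MeasurableSpace Ω] (P : Measure Ω) [IsProbabilityMeasure P]
    (d : ℕ) (α : ℝ) (hα : 0 < α)
    (l : ℝ → ℝ) (hl_cont : ContinuousOn l (Set.Ici (0 : ℝ)))
    (hl_mono : MonotoneOn l (Set.Ici (0 : ℝ)))
    (hl_zero : l 0 = 0) (hl_nonneg : ∀ x : ℝ, 0 ≤ x → 0 ≤ l x)
    (C₀ p : ℝ) (hC₀ : 0 < C₀) (hp : 0 < p)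
    (hl_growth : ∀ x : ℝ, 0 ≤ x → l x ≤ C₀ * (1 + x ^ p))
    (G : ℕ → EuclideanSpace ℝ (Fin d) → Ω → EuclideanSpace ℝ (Fin d))
    (hG_meas : ∀ n u, Measurable (G n u))
    (hmom : ∃ q : ℝ, p < q ∧ ∃ K : ℝ, 0 < K ∧ ∃ n₀ : ℕ, ∀ n, n₀ ≤ n →
      ∀ u : EuclideanSpace ℝ (Fin d), ‖u‖ ≤ α →
        ∫⁻ ω, ENNReal.ofReal (‖G n u ω‖ ^ q) ∂P ≤ ENNReal.ofReal K)
    (hunif : ∀ δ : ℝ, 0 < δ → ∀ ε : ℝ, 0 < ε → ∃ n₁ : ℕ, ∀ n, n₁ ≤ n →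
      ∀ u : EuclideanSpace ℝ (Fin d), ‖u‖ ≤ α →
        P {ω | δ < ‖G n u ω - G n 0 ω‖} < ENNReal.ofReal ε) :
    ∀ ε : ℝ, 0 < ε → ∃ N : ℕ, ∀ n, N ≤ n →
      ∀ u : EuclideanSpace ℝ (Fin d), ‖u‖ ≤ α →
        |(∫ ω, l ‖G n u ω‖ ∂P) - ∫ ω, l ‖G n 0 ω‖ ∂P| ≤ ε :=
  uniform_risk_convergence_general P d α l hl_cont hl_mono hl_nonneg C₀ p hC₀ hp hl_growth G hG_meas
    hmom hunif
end
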